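/- arXiv:1408.4079 — 5 statements merged into one kernel-verified Lean document; each statement's English description precedes it below -/
import Mathlib

section
/- Let l > 0 and T > 0. Let f : ℝ × [0,T] → ℝ satisfy: f, ∂_x f and ∂_t f are continuous; for each t, f(x,t) → 0 as |x| → ∞ uniformly in t; sup_{x,t} |f(x,t)| < l; for every (x,t) the principal-value limit Λf(x,t) := (1/π)·lim_{ε→0⁺} ∫_{|y|>ε} (f(x,t)−f(x−y,t))/y² dy exists, and Λf is continuous and bounded; and ∂_t f(x,t) = (−1/(1+(∂_x f(x,t))²) + 1/(1+l²−f(x,t)²))·Λf(x,t) pointwise. Then t ↦ sup_x |f(x,t)| is nonincreasing on [0,T]; in particular sup_x |f(x,t)| ≤ sup_x |f(x,0)| for all t ∈ [0,T]. -/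
/-!
At a point `q` where `x ↦ f(x,t)²` attains its maximum, `q` is a global extremum of `f(·,t)`, so
`∂ₓf(q,t) = 0` and the principal-value integrand defining `Λf(q,t)` has the sign of `f(q,t)`;
since `|f| < l` the coefficient `-1 + 1/(1 + l² - f²)` is nonpositive, hence `∂ₜ(f²) ≤ 0` there.
Uniform decay keeps the near-maximal points in a compact set, and compactness turns this pointwise
sign into a uniform one for nearby times, so `sup f²` cannot cross any line of positive slope
starting above it. Letting the slope tend to zero gives the monotonicity.
-/

open MeasureTheory Filter Set

/-- The truncated principal-value integral for the fractional Laplacian on `ℝ`. -/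
noncomputable def pvIntegral (u : ℝ → ℝ) (x ε : ℝ) : ℝ :=
  (1 / Real.pi) * ∫ y in {y : ℝ | ε < |y|}, (u x - u (x - y)) / y ^ 2

/-- `Λu(x) = L` in the principal-value sense. -/
def HasPVLambda (u : ℝ → ℝ) (x L : ℝ) : Prop :=
  Tendsto (fun ε => pvIntegral u x ε) (nhdsWithin 0 (Set.Ioi 0)) (nhds L)

open Topology

theorem HasPVLambda.nonneg_of_forall_le {u : ℝ → ℝ} {x L : ℝ} (hL : HasPVLambda u x L)
    (hmax : ∀ y, u y ≤ u x) : 0 ≤ L :=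
  ge_of_tendsto' hL fun _ => mul_nonneg (by positivity) <|
    setIntegral_nonneg (measurableSet_lt measurable_const measurable_abs) fun y _ =>
      div_nonneg (sub_nonneg.2 (hmax _)) (sq_nonneg y)

theorem HasPVLambda.nonpos_of_forall_ge {u : ℝ → ℝ} {x L : ℝ} (hL : HasPVLambda u x L)
    (hmin : ∀ y, u x ≤ u y) : L ≤ 0 :=
  le_of_tendsto' hL fun _ => mul_nonpos_of_nonneg_of_nonpos (by positivity) <|
    setIntegral_nonpos (measurableSet_lt measurable_const measurable_abs) fun y _ =>
      div_nonpos_of_nonpos_of_nonneg (sub_nonpos.2 (hmin _)) (sq_nonneg y)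

theorem forall_le_of_forall_sq_le {u : ℝ → ℝ} {x : ℝ} (hu : ∀ y, u y ^ 2 ≤ u x ^ 2)
    (hx : 0 ≤ u x) (y : ℝ) : u y ≤ u x :=
  (le_abs_self _).trans ((sq_le_sq.1 (hu y)).trans (abs_of_nonneg hx).le)

theorem forall_ge_of_forall_sq_le {u : ℝ → ℝ} {x : ℝ} (hu : ∀ y, u y ^ 2 ≤ u x ^ 2)
    (hx : u x ≤ 0) (y : ℝ) : u x ≤ u y :=
  neg_le_neg_iff.1 <| (neg_le_abs _).trans ((sq_le_sq.1 (hu y)).trans (abs_of_nonpos hx).le)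

theorem deriv_eq_zero_of_forall_sq_le {u : ℝ → ℝ} {x : ℝ} (hu : ∀ y, u y ^ 2 ≤ u x ^ 2) :
    deriv u x = 0 := by
  rcases le_total 0 (u x) with hx | hx
  · exact IsLocalMax.deriv_eq_zero (.of_forall (forall_le_of_forall_sq_le hu hx))
  · exact IsLocalMin.deriv_eq_zero (.of_forall (forall_ge_of_forall_sq_le hu hx))

theorem HasPVLambda.mul_nonneg_of_forall_sq_le {u : ℝ → ℝ} {x L : ℝ} (hL : HasPVLambda u x L)
    (hu : ∀ y, u y ^ 2 ≤ u x ^ 2) : 0 ≤ u x * L := by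
  rcases le_total 0 (u x) with hx | hx
  · exact mul_nonneg hx (hL.nonneg_of_forall_le (forall_le_of_forall_sq_le hu hx))
  · exact mul_nonneg_of_nonpos_of_nonpos hx
      (hL.nonpos_of_forall_ge (forall_ge_of_forall_sq_le hu hx))

theorem HasPVLambda.mul_interface_rhs_nonpos {u : ℝ → ℝ} {x L l : ℝ} (hL : HasPVLambda u x L)
    (hu : ∀ y, u y ^ 2 ≤ u x ^ 2) (hul : u x ^ 2 ≤ l ^ 2) :
    u x * ((-(1 / (1 + deriv u x ^ 2)) + 1 / (1 + l ^ 2 - u x ^ 2)) * L) ≤ 0 := by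
  have hcoef : -(1 / (1 + deriv u x ^ 2)) + 1 / (1 + l ^ 2 - u x ^ 2) ≤ 0 := by
    rw [deriv_eq_zero_of_forall_sq_le hu, neg_add_nonpos_iff]
    simpa using one_div_le_one_div_of_le one_pos (show 1 ≤ 1 + l ^ 2 - u x ^ 2 by linarith)
  calc _ = (-(1 / (1 + deriv u x ^ 2)) + 1 / (1 + l ^ 2 - u x ^ 2)) * (u x * L) := by ring
    _ ≤ 0 := mul_nonpos_of_nonpos_of_nonneg hcoef (hL.mul_nonneg_of_forall_sq_le hu)

section MaximumPrinciple

variable {X : Type*} [TopologicalSpace X] {g h : X → ℝ → ℝ} {T : ℝ}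

theorem eventually_nhdsGT_forall_le_add_mul
    (hg : ContinuousOn (fun p : X × ℝ => g p.1 p.2) (univ ×ˢ Icc 0 T))
    (hh : ContinuousOn (fun p : X × ℝ => h p.1 p.2) (univ ×ˢ Icc 0 T))
    (hgh : ∀ x, ∀ s ∈ Icc 0 T, HasDerivWithinAt (g x) (h x s) (Icc 0 T) s)
    (hmax : ∀ t ∈ Icc 0 T, ∀ q, (∀ x, g x t ≤ g q t) → h q t ≤ 0)
    {m : ℝ} (hout : ∀ᶠ x in cocompact X, ∀ s ∈ Icc 0 T, g x s < m)
    {t₀ : ℝ} (ht₀ : t₀ ∈ Ico 0 T) (hm : ∀ x, g x t₀ ≤ m) {r : ℝ} (hr : 0 < r) :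
    ∀ᶠ z in 𝓝[>] t₀, ∀ x, g x z ≤ m + r * (z - t₀) := by
  have ht₀' : t₀ ∈ Icc 0 T := Ico_subset_Icc_self ht₀
  obtain ⟨C, hC, hCout⟩ := mem_cocompact.1 hout
  have hnear_compact : ∀ᶠ s in 𝓝 t₀, ∀ x ∈ C, s ∈ Icc 0 T → h x s < r ∨ g x s < m := by
    refine hC.eventually_forall_of_forall_eventually fun x _ => ?_
    suffices ∀ᶠ p in 𝓝[univ ×ˢ Icc 0 T] (x, t₀), h p.1 p.2 < r ∨ g p.1 p.2 < m by
      rw [eventually_nhdsWithin_iff] at this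
      filter_upwards [(continuous_swap.tendsto (t₀, x)).eventually this] with p hp hs
      exact hp ⟨mem_univ _, hs⟩
    rcases (hm x).lt_or_eq with hlt | heq
    · exact (hg (x, t₀) ⟨mem_univ _, ht₀'⟩ |>.eventually (gt_mem_nhds hlt)).mono fun _ => Or.inr
    · have hxr : h x t₀ < r := (hmax t₀ ht₀' x fun y => heq ▸ hm y).trans_lt hr
      exact (hh (x, t₀) ⟨mem_univ _, ht₀'⟩ |>.eventually (gt_mem_nhds hxr)).mono fun _ => Or.inl
  have hnear : ∀ᶠ s in 𝓝 t₀, ∀ x, s ∈ Icc 0 T → h x s < r ∨ g x s < m :=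
    hnear_compact.mono fun s hs x hsI => by
      by_cases hxC : x ∈ C
      · exact hs x hxC hsI
      · exact Or.inr (hCout hxC s hsI)
  obtain ⟨u, hu, hIco⟩ := mem_nhdsGE_iff_exists_Ico_subset.1 (mem_nhdsWithin_of_mem_nhds hnear)
  filter_upwards [Ioo_mem_nhdsGT (lt_min hu ht₀.2)] with z hz x
  have hzu : z ≤ u := hz.2.le.trans (min_le_left _ _)
  have hzT : z < T := hz.2.trans_le (min_le_right _ _)
  have hsub : Ico t₀ z ⊆ Ico 0 T := Ico_subset_Ico ht₀.1 hzT.le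
  have hB : ∀ s, HasDerivAt (fun s => m + r * (s - t₀)) r s := fun s => by
    simpa using (((hasDerivAt_id s).sub_const t₀).const_mul r).const_add m
  -- `g x` can touch the line `m + r (s - t₀)` only where `g x ≥ m`, hence where `h x < r`
  refine image_le_of_deriv_right_lt_deriv_boundary (f' := h x) ?_ ?_ (by simpa using hm x) hB ?_
    ⟨hz.1.le, le_rfl⟩
  · exact fun s hs => (hgh x s (Icc_subset_Icc ht₀.1 hzT.le hs)).continuousWithinAt.mono
      (Icc_subset_Icc ht₀.1 hzT.le)
  · exact fun s hs => (hgh x s (Ico_subset_Icc_self (hsub hs))).mono_of_mem_nhdsWithin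
      (Icc_mem_nhdsGE_of_mem (hsub hs))
  · intro s hs hgs
    refine (hIco (Ico_subset_Ico_right hzu hs) x (Ico_subset_Icc_self (hsub hs))).resolve_right
      fun hlt => ?_
    nlinarith [hs.1]

theorem forall_le_of_forall_le_of_le
    (hg : ContinuousOn (fun p : X × ℝ => g p.1 p.2) (univ ×ˢ Icc 0 T))
    (hh : ContinuousOn (fun p : X × ℝ => h p.1 p.2) (univ ×ˢ Icc 0 T))
    (hgh : ∀ x, ∀ s ∈ Icc 0 T, HasDerivWithinAt (g x) (h x s) (Icc 0 T) s)
    (hmax : ∀ t ∈ Icc 0 T, ∀ q, (∀ x, g x t ≤ g q t) → h q t ≤ 0)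
    (hdecay : ∀ ε > 0, ∀ᶠ x in cocompact X, ∀ s ∈ Icc 0 T, g x s < ε)
    {t₁ t₂ : ℝ} (ht₁ : 0 ≤ t₁) (ht₂ : t₂ ≤ T) (h12 : t₁ ≤ t₂)
    {m : ℝ} (hm₀ : 0 ≤ m) (hm : ∀ x, g x t₁ ≤ m) (x : X) : g x t₂ ≤ m := by
  have hsub : Icc t₁ t₂ ⊆ Icc 0 T := Icc_subset_Icc ht₁ ht₂
  have hbarrier : ∀ ε > 0, ∀ s ∈ Icc t₁ t₂, ∀ x, g x s ≤ m + ε * (1 + (s - t₁)) := by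
    intro ε hε
    set S := {s | ∀ x, g x s ≤ m + ε * (1 + (s - t₁))}
    refine IsClosed.Icc_subset_of_forall_mem_nhdsWithin (s := S) ?_
      (fun x => by nlinarith [hm x]) ?_
    · have hS : S ∩ Icc t₁ t₂ =
          (⋂ x, {s ∈ Icc t₁ t₂ | g x s ≤ m + ε * (1 + (s - t₁))}) ∩ Icc t₁ t₂ := by
        ext s; simp +contextual [S, iff_def]
      rw [hS]
      refine (isClosed_iInter fun x => isClosed_Icc.isClosed_le ?_ (by fun_prop)).inter
        isClosed_Icc
      exact fun s hs => (hgh x s (hsub hs)).continuousWithinAt.mono hsub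
    · intro s ⟨hs, hsI⟩
      have hpos : 0 < m + ε * (1 + (s - t₁)) := by nlinarith [hsI.1]
      filter_upwards [eventually_nhdsGT_forall_le_add_mul hg hh hgh hmax (hdecay _ hpos)
        ⟨ht₁.trans hsI.1, hsI.2.trans_le ht₂⟩ hs hε] with z hz x
      linarith [hz x]
  refine le_of_forall_pos_le_add fun ε hε => ?_
  have hd : 0 < 1 + (t₂ - t₁) := by linarith
  simpa [div_mul_cancel₀ _ hd.ne'] using
    hbarrier (ε / (1 + (t₂ - t₁))) (by positivity) t₂ ⟨h12, le_rfl⟩ x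

end MaximumPrinciple

theorem eventually_cocompact_sq_lt {f : ℝ → ℝ → ℝ} {I : Set ℝ}
    (hdecay : ∀ ε > (0:ℝ), ∃ R : ℝ, ∀ t ∈ I, ∀ x : ℝ, R ≤ |x| → |f x t| ≤ ε) :
    ∀ ε > (0:ℝ), ∀ᶠ x in cocompact ℝ, ∀ t ∈ I, f x t ^ 2 < ε := by
  intro ε hε
  obtain ⟨R, hR⟩ := hdecay (√ε / 2) (by positivity)
  refine mem_cocompact.2 ⟨Metric.closedBall 0 R, isCompact_closedBall 0 R, fun x hx t ht => ?_⟩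
  have hRx : R ≤ |x| := by simpa using (not_le.1 (mt mem_closedBall_zero_iff.2 hx)).le
  calc f x t ^ 2 = |f x t| ^ 2 := (sq_abs _).symm
    _ ≤ (√ε / 2) ^ 2 := pow_le_pow_left₀ (abs_nonneg _) (hR t ht x hRx) 2
    _ = ε / 4 := by rw [div_pow, Real.sq_sqrt hε.le]; norm_num
    _ < ε := by linarith

theorem linfty_maximum_principle_general
    (l T : ℝ) (hT : 0 < T)
    (f Λf : ℝ → ℝ → ℝ)
    -- f, ∂_x f and ∂_t f are continuous
    (hfc : ContinuousOn (fun p : ℝ × ℝ => f p.1 p.2) (univ ×ˢ Icc 0 T))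
    (htc : ContinuousOn
      (fun p : ℝ × ℝ => derivWithin (fun s => f p.1 s) (Icc 0 T) p.2) (univ ×ˢ Icc 0 T))
    -- f(x,t) → 0 as |x| → ∞, uniformly in t
    (hdecay : ∀ ε > (0:ℝ), ∃ R : ℝ, ∀ t ∈ Icc (0:ℝ) T, ∀ x : ℝ, R ≤ |x| → |f x t| ≤ ε)
    -- sup_{x,t} |f| < l
    (hamp : ∃ c : ℝ, c < l ∧ ∀ x : ℝ, ∀ t ∈ Icc (0:ℝ) T, |f x t| ≤ c)
    -- the principal value Λf exists everywhere, and Λf is continuous and bounded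
    (hpv : ∀ x : ℝ, ∀ t ∈ Icc (0:ℝ) T, HasPVLambda (fun y => f y t) x (Λf x t))
    -- the equation holds pointwise
    (heq : ∀ x : ℝ, ∀ t ∈ Icc (0:ℝ) T,
      HasDerivWithinAt (fun s => f x s)
        ((-(1 / (1 + (deriv (fun y => f y t) x) ^ 2))
            + 1 / (1 + l ^ 2 - f x t ^ 2)) * Λf x t) (Icc 0 T) t) :
    (∀ t₁ ∈ Icc (0:ℝ) T, ∀ t₂ ∈ Icc (0:ℝ) T, t₁ ≤ t₂ →
        (⨆ x : ℝ, |f x t₂|) ≤ ⨆ x : ℝ, |f x t₁|) ∧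
    ∀ t ∈ Icc (0:ℝ) T, (⨆ x : ℝ, |f x t|) ≤ ⨆ x : ℝ, |f x 0| := by
  obtain ⟨c, hcl, hc⟩ := hamp
  have hderiv_sq : ∀ x s, s ∈ Icc 0 T → HasDerivWithinAt (fun s => f x s ^ 2)
      (2 * f x s * derivWithin (fun s => f x s) (Icc 0 T) s) (Icc 0 T) s := fun x s hs => by
    simpa [mul_comm] using ((heq x s hs).differentiableWithinAt.hasDerivWithinAt).fun_pow 2
  have hmax : ∀ t ∈ Icc 0 T, ∀ q, (∀ x, f x t ^ 2 ≤ f q t ^ 2) →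
      2 * f q t * derivWithin (fun s => f q s) (Icc 0 T) t ≤ 0 := fun t ht q hq => by
    rw [(heq q t ht).derivWithin (uniqueDiffOn_Icc hT t ht), mul_assoc]
    exact mul_nonpos_of_nonneg_of_nonpos zero_le_two <| (hpv q t ht).mul_interface_rhs_nonpos hq
      (sq_le_sq.2 ((hc q t ht).trans (hcl.le.trans (le_abs_self l))))
  have hmono : ∀ t₁ ∈ Icc (0:ℝ) T, ∀ t₂ ∈ Icc (0:ℝ) T, t₁ ≤ t₂ →
      (⨆ x : ℝ, |f x t₂|) ≤ ⨆ x : ℝ, |f x t₁| := by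
    intro t₁ ht₁ t₂ ht₂ h12
    have hle : ∀ x, |f x t₁| ≤ ⨆ y, |f y t₁| :=
      le_ciSup ⟨c, forall_mem_range.2 fun x => hc x t₁ ht₁⟩
    have hsup : 0 ≤ ⨆ y, |f y t₁| := Real.iSup_nonneg fun _ => abs_nonneg _
    refine ciSup_le fun x => abs_le_of_sq_le_sq ?_ hsup
    exact forall_le_of_forall_le_of_le (hfc.pow 2) ((continuousOn_const.mul hfc).mul htc)
      hderiv_sq hmax (eventually_cocompact_sq_lt hdecay) ht₁.1 ht₂.2 h12 (sq_nonneg _)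
      (fun y => by simpa only [sq_abs] using pow_le_pow_left₀ (abs_nonneg _) (hle y) 2) x
  exact ⟨hmono, fun t ht => hmono 0 ⟨le_rfl, hT.le⟩ t ht ht.1⟩

/-- the `L^∞` maximum principle for the model
`∂_t f = (−1/(1+(∂_x f)²) + 1/(1+l²−f²))·Λf` on `ℝ × [0,T]`:
`t ↦ sup_x |f(x,t)|` is nonincreasing. -/
theorem linfty_maximum_principle
    (l T : ℝ) (hl : 0 < l) (hT : 0 < T)
    (f Λf : ℝ → ℝ → ℝ)
    -- f, ∂_x f and ∂_t f are continuous
    (hfc : ContinuousOn (fun p : ℝ × ℝ => f p.1 p.2) (univ ×ˢ Icc 0 T))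
    (hfx : ∀ t ∈ Icc (0:ℝ) T, Differentiable ℝ fun x => f x t)
    (hfxc : ContinuousOn (fun p : ℝ × ℝ => deriv (fun x => f x p.2) p.1) (univ ×ˢ Icc 0 T))
    (htc : ContinuousOn
      (fun p : ℝ × ℝ => derivWithin (fun s => f p.1 s) (Icc 0 T) p.2) (univ ×ˢ Icc 0 T))
    -- f(x,t) → 0 as |x| → ∞, uniformly in t
    (hdecay : ∀ ε > (0:ℝ), ∃ R : ℝ, ∀ t ∈ Icc (0:ℝ) T, ∀ x : ℝ, R ≤ |x| → |f x t| ≤ ε)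
    -- sup_{x,t} |f| < l
    (hamp : ∃ c : ℝ, c < l ∧ ∀ x : ℝ, ∀ t ∈ Icc (0:ℝ) T, |f x t| ≤ c)
    -- the principal value Λf exists everywhere, and Λf is continuous and bounded
    (hpv : ∀ x : ℝ, ∀ t ∈ Icc (0:ℝ) T, HasPVLambda (fun y => f y t) x (Λf x t))
    (hΛc : ContinuousOn (fun p : ℝ × ℝ => Λf p.1 p.2) (univ ×ˢ Icc 0 T))
    (hΛb : ∃ M : ℝ, ∀ x : ℝ, ∀ t ∈ Icc (0:ℝ) T, |Λf x t| ≤ M)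
    -- the equation holds pointwise
    (heq : ∀ x : ℝ, ∀ t ∈ Icc (0:ℝ) T,
      HasDerivWithinAt (fun s => f x s)
        ((-(1 / (1 + (deriv (fun y => f y t) x) ^ 2))
            + 1 / (1 + l ^ 2 - f x t ^ 2)) * Λf x t) (Icc 0 T) t) :
    (∀ t₁ ∈ Icc (0:ℝ) T, ∀ t₂ ∈ Icc (0:ℝ) T, t₁ ≤ t₂ →
        (⨆ x : ℝ, |f x t₂|) ≤ ⨆ x : ℝ, |f x t₁|) ∧
    ∀ t ∈ Icc (0:ℝ) T, (⨆ x : ℝ, |f x t|) ≤ ⨆ x : ℝ, |f x 0| :=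
  linfty_maximum_principle_general l T hT f Λf hfc htc hdecay hamp hpv heq
end

section
/- Let l > 0 and T > 0. Let f : ℝ × [0,T] → ℝ be 2π-periodic in x and odd in x for each t (f(−x,t) = −f(x,t)), with f, ∂_x f, ∂_t f continuous, sup_{x,t} |f(x,t)| < l, such that for every (x,t) the principal-value limit Λf(x,t) := (1/(4π))·lim_{ε→0⁺} ∫_{ε<|η|<π} (f(x,t)−f(x−η,t))/sin²(η/2) dη exists with Λf continuous and bounded, and ∂_t f = (−1/(1+(∂_x f)²) + 1/(1+l²−f²))·Λf pointwise. Set M₀ := sup_x |f(x,0)|. Then for every t ∈ [0,T]: sup_x |f(x,t)| ≤ l·M₀ / (M₀ + (l − M₀)·e^{(C_l/2)·t}), where C_l := l²/(1+l²). In particular the amplitude decays exponentially, but the decay degenerates as M₀ → l. -/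
open MeasureTheory Filter Set

/-- The truncated principal-value integral for the periodic fractional Laplacian. -/
noncomputable def pvIntegralT (u : ℝ → ℝ) (x ε : ℝ) : ℝ :=
  (1 / (4 * Real.pi)) *
    ∫ η in {η : ℝ | ε < |η| ∧ |η| < Real.pi}, (u x - u (x - η)) / Real.sin (η / 2) ^ 2

/-- `Λu(x) = L` in the periodic principal-value sense. -/
def HasPVLambdaT (u : ℝ → ℝ) (x L : ℝ) : Prop :=
  Tendsto (fun ε => pvIntegralT u x ε) (nhdsWithin 0 (Set.Ioi 0)) (nhds L)

/-!
At a maximum `x` of `|f(·, t)|` we have `∂ₓ f = 0`, and `f Λf ≥ f² / 2` there: on `(-π, π)` the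
kernel `1 / sin² (η / 2)` is at least `1`, `f(x) - f(x - η)` has the sign of `f(x)`, and an odd
periodic function has mean zero. The equation thus gives `∂ₜ f² ≤ -f² (l² - f²) / (1 + l²)` at
every maximizer, and a Danskin-type argument turns this into a Dini differential inequality for
`N(t) = maxₓ f(x, t)²`. The square of the logistic solution of `B' = -(C_l / 2) B (l - B) / l`,
`B(0) = M₀`, is a supersolution of that inequality, whence `N ≤ B²`.
-/

open Real Topology

lemma sin_half_sq_pos {ε η : ℝ} (hε : 0 < ε) (hη : η ∈ Icc (-π) π \ Ioo (-ε) ε) :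
    0 < sin (η / 2) ^ 2 := by
  obtain ⟨⟨h1, h2⟩, h3⟩ := hη
  have hsin : sin (η / 2) ≠ 0 := by
    rw [Ne, sin_eq_zero_iff_of_lt_of_lt (by linarith [pi_pos]) (by linarith [pi_pos])]
    intro h
    exact h3 ⟨by linarith, by linarith⟩
  positivity

lemma Function.Odd.intervalIntegral_eq_zero {u : ℝ → ℝ} (hu : u.Odd) (a : ℝ) :
    ∫ x in -a..a, u x = 0 := by
  have h : ∫ x in -a..a, u (-x) = ∫ x in -a..a, u x := by
    rw [intervalIntegral.integral_comp_neg, neg_neg]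
  simp only [hu.eq, intervalIntegral.integral_neg] at h
  linarith

lemma HasPVLambdaT.neg {u : ℝ → ℝ} {x L : ℝ} (h : HasPVLambdaT u x L) :
    HasPVLambdaT (fun y => -u y) x (-L) := by
  have hneg (ε : ℝ) : pvIntegralT (fun y => -u y) x ε = -pvIntegralT u x ε := by
    simp only [pvIntegralT, ← mul_neg, ← integral_neg, neg_div, neg_sub_neg, ← neg_sub (u x)]
  simpa only [HasPVLambdaT, hneg] using Tendsto.neg h

lemma integral_sub_comp_sub_of_periodic {u : ℝ → ℝ} (hu : Continuous u)
    (hper : u.Periodic (2 * π)) (hmean : ∫ y in -π..π, u y = 0) (x₀ : ℝ) :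
    ∫ η in Ioo (-π) π, (u x₀ - u (x₀ - η)) = 2 * π * u x₀ := by
  have hshift : ∫ η in -π..π, u (x₀ - η) = 0 := by
    rw [intervalIntegral.integral_comp_sub_left, ← hmean, sub_neg_eq_add,
      show x₀ + π = x₀ - π + 2 * π by ring, hper.intervalIntegral_add_eq (x₀ - π) (-π)]
    ring_nf
  rw [← integral_Ioc_eq_integral_Ioo, ← intervalIntegral.integral_of_le (by linarith [pi_pos]),
    intervalIntegral.integral_sub intervalIntegrable_const
      ((by fun_prop : Continuous fun η => u (x₀ - η)).intervalIntegrable _ _), hshift]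
  simp only [intervalIntegral.integral_const, smul_eq_mul]
  ring

lemma setOf_lt_abs_lt_abs_eq (ε a : ℝ) :
    {η : ℝ | ε < |η| ∧ |η| < a} = Ioo (-a) a \ Icc (-ε) ε := by
  ext η
  simp only [mem_ofPred_eq, Set.mem_sdiff, mem_Ioo, mem_Icc, abs_lt, lt_abs, not_and_or, not_le]
  constructor
  · rintro ⟨h, h1⟩; exact ⟨h1, h.symm.imp_left lt_neg.mp⟩
  · rintro ⟨h1, h⟩; exact ⟨h.symm.imp_right lt_neg.mp, h1⟩

lemma integrableOn_div_sin_half_sq {g : ℝ → ℝ} (hg : Continuous g) {ε : ℝ} (hε : 0 < ε) :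
    IntegrableOn (fun η => g η / sin (η / 2) ^ 2) {η : ℝ | ε < |η| ∧ |η| < π} := by
  refine ((hg.continuousOn.div (by fun_prop) fun η hη => (sin_half_sq_pos hε hη).ne')
    |>.integrableOn_compact (isCompact_Icc.diff isOpen_Ioo)).mono_set ?_
  rw [setOf_lt_abs_lt_abs_eq]
  exact sdiff_subset_sdiff Ioo_subset_Icc_self Ioo_subset_Icc_self

lemma exists_le_pvIntegralT_of_forall_le {u : ℝ → ℝ} (hu : Continuous u)
    (hper : u.Periodic (2 * π)) (hmean : ∫ y in -π..π, u y = 0) {x₀ : ℝ}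
    (hmax : ∀ y, u y ≤ u x₀) :
    ∃ C, ∀ ε ∈ Ioo 0 π, u x₀ / 2 - C * ε ≤ pvIntegralT u x₀ ε := by
  set g : ℝ → ℝ := fun η => u x₀ - u (x₀ - η)
  have hgc : Continuous g := continuous_const.sub (hu.comp (continuous_sub_left x₀))
  obtain ⟨C, hC⟩ := isCompact_Icc.exists_bound_of_continuousOn (hgc.continuousOn (s := Icc (-π) π))
  refine ⟨C / (2 * π), fun ε ⟨hε0, hεπ⟩ => ?_⟩
  have hS := setOf_lt_abs_lt_abs_eq ε π
  have hkernel : ∫ η in {η : ℝ | ε < |η| ∧ |η| < π}, g η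
      ≤ ∫ η in {η : ℝ | ε < |η| ∧ |η| < π}, g η / sin (η / 2) ^ 2 := by
    have hFint := integrableOn_div_sin_half_sq hgc hε0
    rw [hS] at hFint ⊢
    refine setIntegral_mono_on (hgc.integrableOn_Icc.mono_set (sdiff_subset.trans
      Ioo_subset_Icc_self)) hFint (measurableSet_Ioo.diff measurableSet_Icc) fun η hη => ?_
    exact le_div_self (sub_nonneg.2 (hmax _))
      (sin_half_sq_pos hε0 (sdiff_subset_sdiff Ioo_subset_Icc_self Ioo_subset_Icc_self hη))
      (sin_sq_le_one _)
  have hperiod : ∫ η in {η : ℝ | ε < |η| ∧ |η| < π}, g η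
      = 2 * π * u x₀ - ∫ η in Icc (-ε) ε, g η := by
    rw [hS, setIntegral_sdiff measurableSet_Icc
      (hgc.integrableOn_Icc.mono_set Ioo_subset_Icc_self) (Icc_subset_Ioo (neg_lt_neg hεπ) hεπ),
      integral_sub_comp_sub_of_periodic hu hper hmean]
  have hcore : ∫ η in Icc (-ε) ε, g η ≤ C * (2 * ε) := by
    have h := norm_setIntegral_le_of_norm_le_const (μ := volume) measure_Icc_lt_top
      fun η hη => hC η (Icc_subset_Icc (neg_le_neg hεπ.le) hεπ.le hη)
    rw [volume_real_Icc_of_le (by linarith), Real.norm_eq_abs] at h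
    linarith [le_abs_self (∫ η in Icc (-ε) ε, g η)]
  have hrhs : u x₀ / 2 - C / (2 * π) * ε = 1 / (4 * π) * (2 * π * u x₀ - C * (2 * ε)) := by
    field_simp
    ring
  rw [pvIntegralT, hrhs]
  gcongr
  linarith

lemma HasPVLambdaT.half_le_of_forall_le {u : ℝ → ℝ} {x₀ L : ℝ} (h : HasPVLambdaT u x₀ L)
    (hu : Continuous u) (hper : u.Periodic (2 * π)) (hmean : ∫ y in -π..π, u y = 0)
    (hmax : ∀ y, u y ≤ u x₀) : u x₀ / 2 ≤ L := by
  obtain ⟨C, hC⟩ := exists_le_pvIntegralT_of_forall_le hu hper hmean hmax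
  have hlim : Tendsto (fun ε => u x₀ / 2 - C * ε) (𝓝[>] 0) (𝓝 (u x₀ / 2)) :=
    tendsto_nhdsWithin_of_tendsto_nhds ((continuous_const.sub (continuous_const_mul C)).tendsto' 0 _
      (by simp))
  exact le_of_tendsto_of_tendsto hlim h
    (eventually_of_mem (Ioo_mem_nhdsGT pi_pos) hC)

lemma HasPVLambdaT.sq_div_two_le_mul {u : ℝ → ℝ} {x₀ L : ℝ} (h : HasPVLambdaT u x₀ L)
    (hu : Continuous u) (hper : u.Periodic (2 * π)) (hodd : u.Odd)
    (hmax : ∀ y, |u y| ≤ |u x₀|) : u x₀ ^ 2 / 2 ≤ u x₀ * L := by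
  rcases le_or_gt 0 (u x₀) with hpos | hneg
  · have := h.half_le_of_forall_le hu hper (Function.Odd.intervalIntegral_eq_zero hodd π)
      fun y => (le_abs_self _).trans ((hmax y).trans (abs_of_nonneg hpos).le)
    nlinarith
  · have := h.neg.half_le_of_forall_le hu.neg (fun y => congrArg Neg.neg (hper y))
      (Function.Odd.intervalIntegral_eq_zero (fun y => by simp only [hodd y]) π)
      fun y => (neg_le_abs _).trans ((hmax y).trans (abs_of_neg hneg).le)
    nlinarith

lemma two_mul_mul_le_of_sq_div_two_le {a L l : ℝ} (haL : a ^ 2 / 2 ≤ a * L) (hal : a ^ 2 ≤ l ^ 2) :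
    2 * a * ((-1 + 1 / (1 + l ^ 2 - a ^ 2)) * L) ≤ -(a ^ 2 * (l ^ 2 - a ^ 2)) / (1 + l ^ 2) := by
  have hD : 0 < 1 + l ^ 2 - a ^ 2 := by linarith
  have hfac : -1 + 1 / (1 + l ^ 2 - a ^ 2) = -((l ^ 2 - a ^ 2) / (1 + l ^ 2 - a ^ 2)) := by
    field_simp
    ring
  calc 2 * a * ((-1 + 1 / (1 + l ^ 2 - a ^ 2)) * L)
      = -(2 * ((l ^ 2 - a ^ 2) / (1 + l ^ 2 - a ^ 2)) * (a * L)) := by rw [hfac]; ring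
    _ ≤ -(2 * ((l ^ 2 - a ^ 2) / (1 + l ^ 2 - a ^ 2)) * (a ^ 2 / 2)) := by gcongr
    _ = -(a ^ 2 * (l ^ 2 - a ^ 2) / (1 + l ^ 2 - a ^ 2)) := by ring
    _ ≤ -(a ^ 2 * (l ^ 2 - a ^ 2) / (1 + l ^ 2)) := by
      gcongr
      linarith [sq_nonneg a]
    _ = -(a ^ 2 * (l ^ 2 - a ^ 2)) / (1 + l ^ 2) := neg_div _ _ |>.symm

lemma two_mul_mul_rhs_le_of_forall_sq_le {u : ℝ → ℝ} {x L l : ℝ} (hL : HasPVLambdaT u x L)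
    (hu : Differentiable ℝ u) (hper : u.Periodic (2 * π)) (hodd : u.Odd)
    (hmax : ∀ y, u y ^ 2 ≤ u x ^ 2) (hl : u x ^ 2 ≤ l ^ 2) :
    2 * u x * ((-(1 / (1 + deriv u x ^ 2)) + 1 / (1 + l ^ 2 - u x ^ 2)) * L)
      ≤ -(u x ^ 2 * (l ^ 2 - u x ^ 2)) / (1 + l ^ 2) := by
  have hcrit : u x * deriv u x = 0 := by
    have := IsLocalMax.hasDerivAt_eq_zero (Eventually.of_forall hmax) ((hu x).hasDerivAt.pow 2)
    simpa using this
  rcases mul_eq_zero.mp hcrit with h0 | hd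
  · simp [h0]
  · simpa [hd] using two_mul_mul_le_of_sq_div_two_le
      (hL.sq_div_two_le_mul hu.continuous hper hodd fun y => sq_le_sq.mp (hmax y)) hl

section MaxOverCompact

variable {X : Type*} [TopologicalSpace X] {K : Set X} {g p : X → ℝ → ℝ} {a b : ℝ}

lemma IsCompact.continuousOn_sSup_image (hK : IsCompact K)
    (hg : ContinuousOn (fun q : X × ℝ => g q.1 q.2) (univ ×ˢ Icc a b)) :
    ContinuousOn (fun s => sSup ((g · s) '' K)) (Icc a b) := by
  rcases lt_or_ge b a with hba | hab
  · simp [Icc_eq_empty_of_lt hba]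
  have hG : Continuous fun q : ℝ × X => g q.2 (projIcc a b hab q.1) :=
    hg.comp_continuous (f := fun q : ℝ × X => (q.2, (projIcc a b hab q.1 : ℝ)))
      (continuous_snd.prodMk (continuous_subtype_val.comp (continuous_projIcc.comp continuous_fst)))
      fun q => ⟨mem_univ _, Subtype.prop _⟩
  refine (hK.continuous_sSup (f := fun s x => g x (projIcc a b hab s)) hG).continuousOn.congr
    fun s hs => ?_
  simp only [projIcc_of_mem hab hs]

lemma exists_isMaxOn_slope_sSup_image_le (hK : IsCompact K) (hKne : K.Nonempty)
    (hg : ContinuousOn (fun q : X × ℝ => g q.1 q.2) (univ ×ˢ Icc a b))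
    (hgp : ∀ x ∈ K, ∀ s ∈ Ioo a b, HasDerivAt (g x) (p x s) s)
    {t z : ℝ} (hat : a ≤ t) (htz : t < z) (hzb : z ≤ b) :
    ∃ x ∈ K, IsMaxOn (g · z) K x ∧
      ∃ ξ ∈ Ioo t z, slope (fun s => sSup ((g · s) '' K)) t z ≤ p x ξ := by
  have hslice : ∀ s ∈ Icc a b, ContinuousOn (g · s) K := fun s hs =>
    (hg.comp_continuous (Continuous.prodMk_left s) fun _ => ⟨mem_univ _, hs⟩).continuousOn
  obtain ⟨x, hxK, hNz, hxmax⟩ :=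
    hK.exists_sSup_image_eq_and_ge hKne (hslice z ⟨hat.trans htz.le, hzb⟩)
  obtain ⟨ξ, hξ, hmvt⟩ := exists_hasDerivAt_eq_slope (g x) (p x) htz
    (hg.comp (Continuous.prodMk_right x).continuousOn fun s hs =>
      ⟨mem_univ _, hat.trans hs.1, hs.2.trans hzb⟩)
    fun s hs => hgp x hxK s ⟨hat.trans_lt hs.1, hs.2.trans_le hzb⟩
  have hNt : g x t ≤ sSup ((g · t) '' K) :=
    le_csSup (hK.bddAbove_image (hslice t ⟨hat, (htz.trans_le hzb).le⟩))
      (mem_image_of_mem _ hxK)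
  refine ⟨x, hxK, isMaxOn_iff.2 hxmax, ξ, hξ, ?_⟩
  rw [slope_def_field, hNz, hmvt]
  gcongr ?_ / _
  linarith

/-- A one-sided Danskin estimate; the conclusion says `liminf_{z ↓ t} slope ≤ r`. Maximizers at
times `z ↓ t` accumulate, by compactness, at a maximizer at time `t`. -/
lemma frequently_slope_sSup_image_lt [FirstCountableTopology X] (hK : IsCompact K)
    (hKne : K.Nonempty) (hg : ContinuousOn (fun q : X × ℝ => g q.1 q.2) (univ ×ˢ Icc a b))
    (hp : ContinuousOn (fun q : X × ℝ => p q.1 q.2) (univ ×ˢ Icc a b))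
    (hgp : ∀ x ∈ K, ∀ s ∈ Ioo a b, HasDerivAt (g x) (p x s) s) {t r : ℝ} (ht : t ∈ Ico a b)
    (hr : ∀ x ∈ K, IsMaxOn (g · t) K x → p x t < r) :
    ∃ᶠ z in 𝓝[>] t, slope (fun s => sSup ((g · s) '' K)) t z < r := by
  have hlim : ∀ {q : X → ℝ → ℝ}, ContinuousOn (fun q' : X × ℝ => q q'.1 q'.2) (univ ×ˢ Icc a b) →
      ∀ {u : ℕ → X} {v : ℕ → ℝ} {x : X}, Tendsto u atTop (𝓝 x) → Tendsto v atTop (𝓝 t) →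
        (∀ n, v n ∈ Icc a b) → Tendsto (fun n => q (u n) (v n)) atTop (𝓝 (q x t)) :=
    fun hq _ _ x hu hv hvI => (hq (x, t) ⟨mem_univ _, Ico_subset_Icc_self ht⟩).tendsto.comp
      (tendsto_nhdsWithin_iff.2 ⟨hu.prodMk_nhds hv, Eventually.of_forall fun n =>
        ⟨mem_univ _, hvI n⟩⟩)
  obtain ⟨z, -, hzmem, hzlim⟩ := exists_seq_strictAnti_tendsto' ht.2
  have hzI : ∀ n, z n ∈ Icc a b := fun n => ⟨ht.1.trans (hzmem n).1.le, (hzmem n).2.le⟩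
  choose x hxK hxmax ξ hξ hslope using fun n =>
    exists_isMaxOn_slope_sSup_image_le hK hKne hg hgp ht.1 (hzmem n).1 (hzmem n).2.le
  have hξI : ∀ n, ξ n ∈ Icc a b := fun n =>
    ⟨ht.1.trans (hξ n).1.le, (hξ n).2.le.trans (hzI n).2⟩
  obtain ⟨x₀, hx₀K, φ, hφ, hxφ⟩ := hK.tendsto_subseq hxK
  have hzφ : Tendsto (z ∘ φ) atTop (𝓝 t) := hzlim.comp hφ.tendsto_atTop
  have hξφ : Tendsto (ξ ∘ φ) atTop (𝓝 t) :=
    tendsto_of_tendsto_of_tendsto_of_le_of_le tendsto_const_nhds hzφ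
      (fun n => (hξ (φ n)).1.le) fun n => (hξ (φ n)).2.le
  have hmax₀ : IsMaxOn (g · t) K x₀ := isMaxOn_iff.2 fun y hy =>
    le_of_tendsto_of_tendsto (hlim hg tendsto_const_nhds hzφ fun n => hzI (φ n))
      (hlim hg hxφ hzφ fun n => hzI (φ n))
      (Eventually.of_forall fun n => isMaxOn_iff.1 (hxmax (φ n)) y hy)
  have hev : ∀ᶠ n in atTop, slope (fun s => sSup ((g · s) '' K)) t (z (φ n)) < r :=
    ((hlim hp hxφ hξφ fun n => hξI (φ n)).eventually (gt_mem_nhds (hr x₀ hx₀K hmax₀))).mono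
      fun n hn => (hslope (φ n)).trans_lt hn
  exact (tendsto_nhdsWithin_iff.2 ⟨hzφ, Eventually.of_forall fun n => (hzmem (φ n)).1⟩).frequently
    hev.frequently

end MaxOverCompact

section Logistic

noncomputable def logistic (l m κ s : ℝ) : ℝ := l * m / (m + (l - m) * exp (κ * s))

variable {l m κ : ℝ}

lemma logistic_denom_pos (hm : 0 ≤ m) (hml : m < l) (s : ℝ) : 0 < m + (l - m) * exp (κ * s) := by
  have := exp_pos (κ * s)
  have : 0 < l - m := sub_pos.2 hml
  positivity

lemma hasDerivAt_logistic {s : ℝ} (hD : m + (l - m) * exp (κ * s) ≠ 0) :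
    HasDerivAt (logistic l m κ) (-κ * logistic l m κ s * (l - logistic l m κ s) / l) s := by
  have hden := (((hasDerivAt_id' s).const_mul κ).exp.const_mul (l - m)).const_add m
  refine ((hasDerivAt_const s (l * m)).div hden hD).congr_deriv ?_
  simp only [logistic]
  field_simp
  ring

lemma logistic_nonneg (hm : 0 ≤ m) (hml : m < l) (s : ℝ) : 0 ≤ logistic l m κ s :=
  div_nonneg (mul_nonneg (hm.trans hml.le) hm) (logistic_denom_pos hm hml s).le

lemma logistic_pos (hm : 0 < m) (hml : m < l) (s : ℝ) : 0 < logistic l m κ s :=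
  div_pos (mul_pos (hm.trans hml) hm) (logistic_denom_pos hm.le hml s)

lemma logistic_lt (hm : 0 ≤ m) (hml : m < l) (s : ℝ) : logistic l m κ s < l := by
  rw [logistic, div_lt_iff₀ (logistic_denom_pos hm hml s)]
  have : 0 < (l - m) * exp (κ * s) := mul_pos (sub_pos.2 hml) (exp_pos _)
  nlinarith

lemma continuousAt_logistic_init (hm : 0 ≤ m) (hml : m < l) (s : ℝ) :
    ContinuousAt (fun m' => logistic l m' κ s) m := by
  simp only [logistic]
  exact ContinuousAt.div (by fun_prop) (by fun_prop) (logistic_denom_pos hm hml s).ne'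

end Logistic

lemma le_sq_logistic_of_pos {N : ℝ → ℝ} {l m T : ℝ} (hm : 0 < m) (hml : m < l)
    (hN : ContinuousOn N (Icc 0 T)) (hN0 : N 0 ≤ m ^ 2)
    (hslope : ∀ t ∈ Ico 0 T, ∀ r, -(N t * (l ^ 2 - N t)) / (1 + l ^ 2) < r →
      ∃ᶠ z in 𝓝[>] t, slope N t z < r) :
    ∀ t ∈ Icc 0 T, N t ≤ logistic l m (l ^ 2 / (1 + l ^ 2) / 2) t ^ 2 := by
  set B := logistic l m (l ^ 2 / (1 + l ^ 2) / 2)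
  have hB : ∀ s, HasDerivAt (fun s => B s ^ 2)
      (2 * B s * (-(l ^ 2 / (1 + l ^ 2) / 2) * B s * (l - B s) / l)) s := fun s =>
    ((hasDerivAt_logistic (logistic_denom_pos hm.le hml s).ne').fun_pow 2).congr_deriv (by
      push_cast
      ring)
  have hB0 : B 0 = m := by
    simp only [B, logistic, mul_zero, exp_zero, mul_one, add_sub_cancel]
    field_simp [(hm.trans hml).ne']
  refine image_le_of_liminf_slope_right_lt_deriv_boundary' hN hslope (hB0 ▸ hN0)
    (fun s _ => (hB s).continuousAt.continuousWithinAt) (fun s _ => (hB s).hasDerivWithinAt)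
    fun s _ hNs => ?_
  have hb := logistic_pos (κ := l ^ 2 / (1 + l ^ 2) / 2) hm hml s
  have hbl := sub_pos.2 (logistic_lt (κ := l ^ 2 / (1 + l ^ 2) / 2) hm.le hml s)
  have hsuper : 2 * B s * (-(l ^ 2 / (1 + l ^ 2) / 2) * B s * (l - B s) / l)
      = -(B s ^ 2 * (l ^ 2 - B s ^ 2)) / (1 + l ^ 2) + B s ^ 3 * (l - B s) / (1 + l ^ 2) := by
    field_simp [(hm.trans hml).ne']
    ring
  rw [hNs, hsuper, lt_add_iff_pos_right]
  positivity

/-- For `m = 0` the comparison is no longer strict; approach `m` from above. -/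
lemma le_sq_logistic {N : ℝ → ℝ} {l m T : ℝ} (hm : 0 ≤ m) (hml : m < l)
    (hN : ContinuousOn N (Icc 0 T)) (hN0 : N 0 ≤ m ^ 2)
    (hslope : ∀ t ∈ Ico 0 T, ∀ r, -(N t * (l ^ 2 - N t)) / (1 + l ^ 2) < r →
      ∃ᶠ z in 𝓝[>] t, slope N t z < r) :
    ∀ t ∈ Icc 0 T, N t ≤ logistic l m (l ^ 2 / (1 + l ^ 2) / 2) t ^ 2 := by
  intro t ht
  refine ge_of_tendsto (x := 𝓝[>] m)
    (((continuousAt_logistic_init hm hml t).pow 2).tendsto.mono_left nhdsWithin_le_nhds) ?_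
  filter_upwards [Ioo_mem_nhdsGT hml] with m' hm'
  exact le_sq_logistic_of_pos (hm.trans_lt hm'.1) hm'.2 hN
    (hN0.trans (pow_le_pow_left₀ hm hm'.1.le 2)) hslope t ht

lemma Function.Periodic.image_Icc_neg_pi {v : ℝ → ℝ} (h : v.Periodic (2 * π)) :
    v '' Icc (-π) π = range v := by
  simpa [show -π + 2 * π = π by ring] using h.image_Icc two_pi_pos (-π)

section Amplitude

variable {f : ℝ → ℝ → ℝ} {t : ℝ}

noncomputable def sqAmplitude (f : ℝ → ℝ → ℝ) (t : ℝ) : ℝ :=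
  sSup ((fun x => f x t ^ 2) '' Icc (-π) π)

lemma sq_le_sqAmplitude (hper : (fun x => f x t).Periodic (2 * π))
    (hcont : Continuous fun x => f x t) (x : ℝ) : f x t ^ 2 ≤ sqAmplitude f t := by
  have hrange := (hper.comp (· ^ 2)).image_Icc_neg_pi
  rw [sqAmplitude]
  exact le_csSup (isCompact_Icc.bddAbove_image (hcont.pow 2).continuousOn)
    (hrange ▸ mem_range_self x)

lemma sqAmplitude_eq_of_isMaxOn {x : ℝ} (hx : x ∈ Icc (-π) π)
    (hmax : IsMaxOn (fun x => f x t ^ 2) (Icc (-π) π) x) : sqAmplitude f t = f x t ^ 2 :=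
  IsGreatest.csSup_eq ⟨mem_image_of_mem _ hx, forall_mem_image.2 (isMaxOn_iff.1 hmax)⟩

lemma continuousOn_sqAmplitude {T : ℝ}
    (hfc : ContinuousOn (fun p : ℝ × ℝ => f p.1 p.2) (univ ×ˢ Icc 0 T)) :
    ContinuousOn (sqAmplitude f) (Icc 0 T) :=
  isCompact_Icc.continuousOn_sSup_image (hfc.pow 2)

lemma sqAmplitude_le_sq_iSup (hbdd : BddAbove (range fun x => |f x t|)) :
    sqAmplitude f t ≤ (⨆ x, |f x t|) ^ 2 :=
  csSup_le ((nonempty_Icc.2 (neg_le_self pi_pos.le)).image _) <| forall_mem_image.2 fun x _ =>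
    sq_abs (f x t) ▸ pow_le_pow_left₀ (abs_nonneg _) (le_ciSup hbdd x) 2

lemma frequently_slope_sqAmplitude_lt {l T : ℝ} {Λf : ℝ → ℝ → ℝ} (hT : 0 < T)
    (hper : ∀ x : ℝ, ∀ t ∈ Icc (0:ℝ) T, f (x + 2 * π) t = f x t)
    (hodd : ∀ x : ℝ, ∀ t ∈ Icc (0:ℝ) T, f (-x) t = -f x t)
    (hfc : ContinuousOn (fun p : ℝ × ℝ => f p.1 p.2) (univ ×ˢ Icc 0 T))
    (hfx : ∀ t ∈ Icc (0:ℝ) T, Differentiable ℝ fun x => f x t)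
    (htc : ContinuousOn
      (fun p : ℝ × ℝ => derivWithin (fun s => f p.1 s) (Icc 0 T) p.2) (univ ×ˢ Icc 0 T))
    (hfl : ∀ x : ℝ, ∀ t ∈ Icc (0:ℝ) T, |f x t| ≤ l)
    (hpv : ∀ x : ℝ, ∀ t ∈ Icc (0:ℝ) T, HasPVLambdaT (fun y => f y t) x (Λf x t))
    (heq : ∀ x : ℝ, ∀ t ∈ Icc (0:ℝ) T,
      HasDerivWithinAt (fun s => f x s)
        ((-(1 / (1 + (deriv (fun y => f y t) x) ^ 2))
            + 1 / (1 + l ^ 2 - f x t ^ 2)) * Λf x t) (Icc 0 T) t) :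
    ∀ t ∈ Ico 0 T, ∀ r, -(sqAmplitude f t * (l ^ 2 - sqAmplitude f t)) / (1 + l ^ 2) < r →
      ∃ᶠ z in 𝓝[>] t, slope (sqAmplitude f) t z < r := by
  have hft : ∀ x, ∀ s ∈ Icc 0 T, derivWithin (fun s => f x s) (Icc 0 T) s
      = (-(1 / (1 + (deriv (fun y => f y s) x) ^ 2)) + 1 / (1 + l ^ 2 - f x s ^ 2)) * Λf x s :=
    fun x s hs => (heq x s hs).derivWithin (uniqueDiffOn_Icc hT s hs)
  intro t ht r hr
  have htI := Ico_subset_Icc_self ht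
  refine frequently_slope_sSup_image_lt (g := fun x s => f x s ^ 2)
    (p := fun x s => 2 * f x s * derivWithin (fun s => f x s) (Icc 0 T) s) isCompact_Icc
    (nonempty_Icc.2 (neg_le_self pi_pos.le)) (hfc.pow 2) ((continuousOn_const.mul hfc).mul htc)
    (fun x _ s hs => ?_) ht fun x hxK hmax => ?_
  · have hsI := Ioo_subset_Icc_self hs
    exact ((hft x s hsI ▸ heq x s hsI).hasDerivAt (Icc_mem_nhds hs.1 hs.2)).fun_pow 2
      |>.congr_deriv (by push_cast; ring)
  · have hNt := sqAmplitude_eq_of_isMaxOn hxK hmax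
    have hglobal : ∀ y, f y t ^ 2 ≤ f x t ^ 2 := fun y =>
      hNt ▸ sq_le_sqAmplitude (fun y => hper y t htI) (hfx t htI).continuous y
    refine lt_of_le_of_lt ?_ (hNt ▸ hr)
    rw [hft x t htI]
    have hxl := abs_le.1 (hfl x t htI)
    exact two_mul_mul_rhs_le_of_forall_sq_le (hpv x t htI) (hfx t htI) (fun y => hper y t htI)
      (fun y => hodd y t htI) hglobal (sq_le_sq' hxl.1 hxl.2)

end Amplitude

theorem odd_periodic_amplitude_decay_general
    (l T : ℝ) (hT : 0 < T)
    (f Λf : ℝ → ℝ → ℝ)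
    -- 2π-periodic and odd in x
    (hper : ∀ x : ℝ, ∀ t ∈ Icc (0:ℝ) T, f (x + 2 * Real.pi) t = f x t)
    (hodd : ∀ x : ℝ, ∀ t ∈ Icc (0:ℝ) T, f (-x) t = -f x t)
    -- f, ∂_x f, ∂_t f continuous
    (hfc : ContinuousOn (fun p : ℝ × ℝ => f p.1 p.2) (univ ×ˢ Icc 0 T))
    (hfx : ∀ t ∈ Icc (0:ℝ) T, Differentiable ℝ fun x => f x t)
    (htc : ContinuousOn
      (fun p : ℝ × ℝ => derivWithin (fun s => f p.1 s) (Icc 0 T) p.2) (univ ×ˢ Icc 0 T))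
    -- sup_{x,t} |f| < l
    (hamp : ∃ c : ℝ, c < l ∧ ∀ x : ℝ, ∀ t ∈ Icc (0:ℝ) T, |f x t| ≤ c)
    -- the principal value Λf exists everywhere, and Λf is continuous and bounded
    (hpv : ∀ x : ℝ, ∀ t ∈ Icc (0:ℝ) T, HasPVLambdaT (fun y => f y t) x (Λf x t))
    -- the equation holds pointwise
    (heq : ∀ x : ℝ, ∀ t ∈ Icc (0:ℝ) T,
      HasDerivWithinAt (fun s => f x s)
        ((-(1 / (1 + (deriv (fun y => f y t) x) ^ 2))
            + 1 / (1 + l ^ 2 - f x t ^ 2)) * Λf x t) (Icc 0 T) t) :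
    ∀ t ∈ Icc (0:ℝ) T,
      (⨆ x : ℝ, |f x t|) ≤
        l * (⨆ x : ℝ, |f x 0|) /
          ((⨆ x : ℝ, |f x 0|) +
            (l - ⨆ x : ℝ, |f x 0|) * Real.exp (l ^ 2 / (1 + l ^ 2) / 2 * t)) := by
  obtain ⟨c, hcl, hc⟩ := hamp
  have hT0 : (0 : ℝ) ∈ Icc 0 T := ⟨le_rfl, hT.le⟩
  have hbdd₀ : BddAbove (range fun x => |f x 0|) := ⟨c, forall_mem_range.2 fun x => hc x 0 hT0⟩
  have hM₀ : 0 ≤ ⨆ x, |f x 0| := le_ciSup_of_le hbdd₀ 0 (abs_nonneg _)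
  have hM₀l : ⨆ x, |f x 0| < l := (ciSup_le fun x => hc x 0 hT0).trans_lt hcl
  have hdecay := le_sq_logistic hM₀ hM₀l (continuousOn_sqAmplitude hfc)
    (sqAmplitude_le_sq_iSup hbdd₀) (frequently_slope_sqAmplitude_lt hT hper hodd hfc hfx htc
      (fun x t ht => (hc x t ht).trans hcl.le) hpv heq)
  intro t ht
  exact ciSup_le fun x => abs_le_of_sq_le_sq
    ((sq_le_sqAmplitude (fun y => hper y t ht) (hfx t ht).continuous x).trans (hdecay t ht))
    (logistic_nonneg hM₀ hM₀l t)

/-- exponential decay of the amplitude for odd, 2π-periodic solutions of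
`∂_t f = (−1/(1+(∂_x f)²) + 1/(1+l²−f²))·Λf`, with the decay degenerating as `M₀ → l`. -/
theorem odd_periodic_amplitude_decay
    (l T : ℝ) (hl : 0 < l) (hT : 0 < T)
    (f Λf : ℝ → ℝ → ℝ)
    -- 2π-periodic and odd in x
    (hper : ∀ x : ℝ, ∀ t ∈ Icc (0:ℝ) T, f (x + 2 * Real.pi) t = f x t)
    (hodd : ∀ x : ℝ, ∀ t ∈ Icc (0:ℝ) T, f (-x) t = -f x t)
    -- f, ∂_x f, ∂_t f continuous
    (hfc : ContinuousOn (fun p : ℝ × ℝ => f p.1 p.2) (univ ×ˢ Icc 0 T))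
    (hfx : ∀ t ∈ Icc (0:ℝ) T, Differentiable ℝ fun x => f x t)
    (hfxc : ContinuousOn (fun p : ℝ × ℝ => deriv (fun x => f x p.2) p.1) (univ ×ˢ Icc 0 T))
    (htc : ContinuousOn
      (fun p : ℝ × ℝ => derivWithin (fun s => f p.1 s) (Icc 0 T) p.2) (univ ×ˢ Icc 0 T))
    -- sup_{x,t} |f| < l
    (hamp : ∃ c : ℝ, c < l ∧ ∀ x : ℝ, ∀ t ∈ Icc (0:ℝ) T, |f x t| ≤ c)
    -- the principal value Λf exists everywhere, and Λf is continuous and bounded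
    (hpv : ∀ x : ℝ, ∀ t ∈ Icc (0:ℝ) T, HasPVLambdaT (fun y => f y t) x (Λf x t))
    (hΛc : ContinuousOn (fun p : ℝ × ℝ => Λf p.1 p.2) (univ ×ˢ Icc 0 T))
    (hΛb : ∃ M : ℝ, ∀ x : ℝ, ∀ t ∈ Icc (0:ℝ) T, |Λf x t| ≤ M)
    -- the equation holds pointwise
    (heq : ∀ x : ℝ, ∀ t ∈ Icc (0:ℝ) T,
      HasDerivWithinAt (fun s => f x s)
        ((-(1 / (1 + (deriv (fun y => f y t) x) ^ 2))
            + 1 / (1 + l ^ 2 - f x t ^ 2)) * Λf x t) (Icc 0 T) t) :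
    ∀ t ∈ Icc (0:ℝ) T,
      (⨆ x : ℝ, |f x t|) ≤
        l * (⨆ x : ℝ, |f x 0|) /
          ((⨆ x : ℝ, |f x 0|) +
            (l - ⨆ x : ℝ, |f x 0|) * Real.exp (l ^ 2 / (1 + l ^ 2) / 2 * t)) :=
  odd_periodic_amplitude_decay_general l T hT f Λf hper hodd hfc hfx htc hamp hpv heq
end

section
/- Let l > 0, let f : ℝ → ℝ be three times differentiable with f(x)² < 1 + l² for all x, let g : ℝ → ℝ be twice differentiable, and let x̃ ∈ ℝ satisfy f(x̃) = l and f'(x̃) = 0. Define A(x) := (1/(1+l²−f(x)²) − 1/(1+f'(x)²))·g(x). Then A is twice differentiable at x̃ and A''(x̃) = 2·f''(x̃)·(l + f''(x̃))·g(x̃). -/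
/-!
Write `A = T g` with `T = 1/(1 + l² - f²) - 1/(1 + f'²)`. By Leibniz,
`A'' = T'' g + 2 T' g' + T g''`, and at the touching point `T = T' = 0`, so `A'' = T'' g`.
The second-order chain rule `(F ∘ φ)'' = F''(φ) φ'² + F'(φ) φ''` gives `T'' = 2 l f'' + 2 f''²`:
in the first term `f' = 0` kills `F''(f) f'²`, and in the second `s ↦ 1/(1 + s²)` has
derivative `0` and second derivative `-2` at `s = f' = 0`.
-/

open Filter Topology

section SecondDerivative

variable {F G φ : ℝ → ℝ} {x : ℝ}

theorem hasDerivAt_deriv_sub {F₂ G₂ : ℝ}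
    (hF : ∀ᶠ y in 𝓝 x, DifferentiableAt ℝ F y) (hG : ∀ᶠ y in 𝓝 x, DifferentiableAt ℝ G y)
    (hF₂ : HasDerivAt (deriv F) F₂ x) (hG₂ : HasDerivAt (deriv G) G₂ x) :
    HasDerivAt (deriv fun y => F y - G y) (F₂ - G₂) x := by
  have hderiv : deriv (fun y => F y - G y) =ᶠ[𝓝 x] fun y => deriv F y - deriv G y := by
    filter_upwards [hF, hG] with y hFy hGy
    exact deriv_sub hFy hGy
  exact (hF₂.sub hG₂).congr_of_eventuallyEq hderiv

theorem hasDerivAt_deriv_mul {F₂ G₂ : ℝ}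
    (hF : ∀ᶠ y in 𝓝 x, DifferentiableAt ℝ F y) (hG : ∀ᶠ y in 𝓝 x, DifferentiableAt ℝ G y)
    (hF₂ : HasDerivAt (deriv F) F₂ x) (hG₂ : HasDerivAt (deriv G) G₂ x) :
    HasDerivAt (deriv fun y => F y * G y)
      (F₂ * G x + 2 * deriv F x * deriv G x + F x * G₂) x := by
  have hderiv : deriv (fun y => F y * G y) =ᶠ[𝓝 x]
      fun y => deriv F y * G y + F y * deriv G y := by
    filter_upwards [hF, hG] with y hFy hGy
    exact deriv_mul hFy hGy
  refine ((hF₂.mul hG.self_of_nhds.hasDerivAt).add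
    (hF.self_of_nhds.hasDerivAt.mul hG₂)).congr_of_eventuallyEq hderiv |>.congr_deriv ?_
  ring

theorem hasDerivAt_deriv_comp {F' : ℝ → ℝ} {F₂ φ₂ : ℝ}
    (hF : ∀ᶠ y in 𝓝 x, HasDerivAt F (F' (φ y)) (φ y))
    (hφ : ∀ᶠ y in 𝓝 x, DifferentiableAt ℝ φ y)
    (hF' : HasDerivAt F' F₂ (φ x)) (hφ₂ : HasDerivAt (deriv φ) φ₂ x) :
    HasDerivAt (deriv fun y => F (φ y)) (F₂ * deriv φ x ^ 2 + F' (φ x) * φ₂) x := by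
  have hderiv : deriv (fun y => F (φ y)) =ᶠ[𝓝 x] fun y => F' (φ y) * deriv φ y := by
    filter_upwards [hF, hφ] with y hFy hφy
    exact (hFy.comp y hφy.hasDerivAt).deriv
  refine ((hF'.comp x hφ.self_of_nhds.hasDerivAt).mul hφ₂).congr_of_eventuallyEq hderiv
    |>.congr_deriv ?_
  rw [Function.comp_apply]
  ring

end SecondDerivative

theorem hasDerivAt_one_div_sub_sq {c s : ℝ} (hs : c - s ^ 2 ≠ 0) :
    HasDerivAt (fun s => 1 / (c - s ^ 2)) (2 * s / (c - s ^ 2) ^ 2) s :=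
  ((hasDerivAt_const s 1).fun_div ((hasDerivAt_pow 2 s).const_sub c) hs).congr_deriv (by simp)

theorem hasDerivAt_one_div_one_add_sq (s : ℝ) :
    HasDerivAt (fun s => 1 / (1 + s ^ 2)) (-(2 * s) / (1 + s ^ 2) ^ 2) s :=
  ((hasDerivAt_const s 1).fun_div ((hasDerivAt_pow 2 s).const_add 1)
    (by positivity)).congr_deriv (by simp)

theorem hasDerivAt_deriv_one_div_sub_sq_comp {c : ℝ} {f : ℝ → ℝ} {x : ℝ}
    (hf : Differentiable ℝ f) (hf' : DifferentiableAt ℝ (deriv f) x)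
    (hc : ∀ y, c - f y ^ 2 ≠ 0) (hx : deriv f x = 0) :
    HasDerivAt (deriv fun y => 1 / (c - f y ^ 2))
      (2 * f x / (c - f x ^ 2) ^ 2 * deriv (deriv f) x) x := by
  have hF' : DifferentiableAt ℝ (fun s => 2 * s / (c - s ^ 2) ^ 2) (f x) :=
    DifferentiableAt.div (by fun_prop) (by fun_prop) (pow_ne_zero 2 (hc x))
  refine (hasDerivAt_deriv_comp (.of_forall fun y => hasDerivAt_one_div_sub_sq (hc y))
    (.of_forall hf) hF'.hasDerivAt hf'.hasDerivAt).congr_deriv ?_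
  rw [hx]
  ring

theorem hasDerivAt_deriv_one_div_one_add_sq_comp {φ : ℝ → ℝ} {x : ℝ}
    (hφ : Differentiable ℝ φ) (hφ' : DifferentiableAt ℝ (deriv φ) x) (hx : φ x = 0) :
    HasDerivAt (deriv fun y => 1 / (1 + φ y ^ 2)) (-2 * deriv φ x ^ 2) x := by
  have hF' : HasDerivAt (fun s : ℝ => -(2 * s) / (1 + s ^ 2) ^ 2) (-2) (φ x) :=
    hx ▸ (((hasDerivAt_id 0).const_mul 2).fun_neg.fun_div
      (((hasDerivAt_pow 2 0).const_add 1).fun_pow 2) (by norm_num)).congr_deriv (by norm_num)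
  refine (hasDerivAt_deriv_comp (.of_forall fun y => hasDerivAt_one_div_one_add_sq _)
    (.of_forall hφ) hF' hφ'.hasDerivAt).congr_deriv ?_
  rw [hx]
  ring

theorem second_derivative_at_touching_point_general
    (l : ℝ) (f g : ℝ → ℝ) (xt : ℝ)
    -- f is three times differentiable
    (hf : Differentiable ℝ f)
    (hf' : Differentiable ℝ (deriv f))
    (hf'' : Differentiable ℝ (deriv (deriv f)))
    -- g is twice differentiable
    (hg : Differentiable ℝ g)
    (hg' : Differentiable ℝ (deriv g))
    -- f² < 1 + l²
    (hbound : ∀ x : ℝ, f x ^ 2 < 1 + l ^ 2)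
    -- touching point: f(xt) = l with horizontal tangent
    (htouch : f xt = l) (hslope : deriv f xt = 0) :
    DifferentiableAt ℝ
        (fun x => (1 / (1 + l ^ 2 - f x ^ 2) - 1 / (1 + deriv f x ^ 2)) * g x) xt ∧
      DifferentiableAt ℝ
        (deriv fun x => (1 / (1 + l ^ 2 - f x ^ 2) - 1 / (1 + deriv f x ^ 2)) * g x) xt ∧
      deriv (deriv fun x => (1 / (1 + l ^ 2 - f x ^ 2) - 1 / (1 + deriv f x ^ 2)) * g x) xt
        = 2 * deriv (deriv f) xt * (l + deriv (deriv f) xt) * g xt := by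
  have hden : ∀ x, 1 + l ^ 2 - f x ^ 2 ≠ 0 := fun x => (sub_pos.2 (hbound x)).ne'
  have hF₁ : ∀ x, HasDerivAt (fun y => 1 / (1 + l ^ 2 - f y ^ 2))
      (2 * f x / (1 + l ^ 2 - f x ^ 2) ^ 2 * deriv f x) x := fun x =>
    (hasDerivAt_one_div_sub_sq (hden x)).comp x (hf x).hasDerivAt
  have hF₂ : ∀ x, HasDerivAt (fun y => 1 / (1 + deriv f y ^ 2))
      (-(2 * deriv f x) / (1 + deriv f x ^ 2) ^ 2 * deriv (deriv f) x) x := fun x =>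
    (hasDerivAt_one_div_one_add_sq _).comp x (hf' x).hasDerivAt
  have hT₁ := (hF₁ xt).fun_sub (hF₂ xt)
  have hT₂ := hasDerivAt_deriv_sub (.of_forall fun x => (hF₁ x).differentiableAt)
    (.of_forall fun x => (hF₂ x).differentiableAt)
    (hasDerivAt_deriv_one_div_sub_sq_comp hf (hf' xt) hden hslope)
    (hasDerivAt_deriv_one_div_one_add_sq_comp hf' (hf'' xt) hslope)
  have hA := hasDerivAt_deriv_mul
    (.of_forall fun x => ((hF₁ x).fun_sub (hF₂ x)).differentiableAt) (.of_forall hg)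
    hT₂ (hg' xt).hasDerivAt
  refine ⟨(hT₁.mul (hg xt).hasDerivAt).differentiableAt, hA.differentiableAt, ?_⟩
  rw [hA.deriv, hT₁.deriv, htouch, hslope]
  ring

/-- at a touching point `f(xt) = l`, `f'(xt) = 0`, the coefficient
`A = (1/(1+l²−f²) − 1/(1+f'²))·g` is twice differentiable with
`A''(xt) = 2·f''(xt)·(l + f''(xt))·g(xt)`. -/
theorem second_derivative_at_touching_point
    (l : ℝ) (hl : 0 < l) (f g : ℝ → ℝ) (xt : ℝ)
    -- f is three times differentiable
    (hf : Differentiable ℝ f)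
    (hf' : Differentiable ℝ (deriv f))
    (hf'' : Differentiable ℝ (deriv (deriv f)))
    -- g is twice differentiable
    (hg : Differentiable ℝ g)
    (hg' : Differentiable ℝ (deriv g))
    -- f² < 1 + l²
    (hbound : ∀ x : ℝ, f x ^ 2 < 1 + l ^ 2)
    -- touching point: f(xt) = l with horizontal tangent
    (htouch : f xt = l) (hslope : deriv f xt = 0) :
    DifferentiableAt ℝ
        (fun x => (1 / (1 + l ^ 2 - f x ^ 2) - 1 / (1 + deriv f x ^ 2)) * g x) xt ∧
      DifferentiableAt ℝ
        (deriv fun x => (1 / (1 + l ^ 2 - f x ^ 2) - 1 / (1 + deriv f x ^ 2)) * g x) xt ∧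
      deriv (deriv fun x => (1 / (1 + l ^ 2 - f x ^ 2) - 1 / (1 + deriv f x ^ 2)) * g x) xt
        = 2 * deriv (deriv f) xt * (l + deriv (deriv f) xt) * g xt :=
  second_derivative_at_touching_point_general l f g xt hf hf' hf'' hg hg' hbound htouch hslope
end

section
/- Let T > 0 and let f : ℝ × [0,T] → ℝ be 2π-periodic in x and jointly smooth, such that for every (x,t) the principal-value limits Λf(x,t) := (1/(4π))·lim_{ε→0⁺} ∫_{ε<|η|<π} (f(x,t)−f(x−η,t))/sin²(η/2) dη and Λ∂_x f(x,t) (defined by the same kernel applied to ∂_x f) exist and are jointly continuous, and assume ∂_t f = −Λf/(1+(∂_x f)²) pointwise. Then for every t ∈ [0,T]: ∫_{−π}^{π} (∂_x f(x,t))² dx + (1/6)∫_{−π}^{π} (∂_x f(x,t))⁴ dx + 2∫₀^t ∫_{−π}^{π} ∂_x f(x,s)·Λ∂_x f(x,s) dx ds = ∫_{−π}^{π} (∂_x f(x,0))² dx + (1/6)∫_{−π}^{π} (∂_x f(x,0))⁴ dx. -/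
open MeasureTheory Filter Set

open scoped ContDiff

/-- Symmetrized integrand for the truncated pv integral. -/
noncomputable def symInt (u : ℝ → ℝ) (x η : ℝ) : ℝ :=
  (2 * u x - u (x - η) - u (x + η)) / Real.sin (η / 2) ^ 2


lemma sin_half_pos {η : ℝ} (h1 : 0 < η) (h2 : η ≤ Real.pi) : 0 < Real.sin (η / 2) :=
  Real.sin_pos_of_pos_of_lt_pi (by linarith) (by linarith [Real.pi_pos])

lemma sin_half_lb {η : ℝ} (h1 : 0 ≤ η) (h2 : η ≤ Real.pi) : η / Real.pi ≤ Real.sin (η / 2) := by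
  have h := Real.mul_le_sin (x := η / 2) (by linarith) (by linarith)
  have hπ : Real.pi ≠ 0 := Real.pi_ne_zero
  calc η / Real.pi = 2 / Real.pi * (η / 2) := by field_simp
    _ ≤ Real.sin (η / 2) := h

lemma sin_half_ne {η : ℝ} (h0 : η ≠ 0) (h2 : |η| ≤ Real.pi) : Real.sin (η / 2) ≠ 0 := by
  rcases lt_or_gt_of_ne h0 with h | h
  · have : 0 < Real.sin (-η / 2) := sin_half_pos (by linarith) (by
      have := abs_le.mp h2; linarith [this.1])
    rw [neg_div, Real.sin_neg] at this
    linarith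
  · have := sin_half_pos h ((le_abs_self η).trans h2)
    linarith

/-- symmetrization of the truncated pv integral -/

lemma pv_eq_sym (u : ℝ → ℝ) (hu : Continuous u) {ε : ℝ} (hε : 0 < ε) (hεπ : ε < Real.pi)
    (x : ℝ) :
    pvIntegralT u x ε = (1 / (4 * Real.pi)) * ∫ η in ε..Real.pi, symInt u x η := by
  have hπ := Real.pi_pos
  set w : ℝ → ℝ := fun η => (u x - u (x - η)) / Real.sin (η / 2) ^ 2 with hw
  have hset : {η : ℝ | ε < |η| ∧ |η| < Real.pi} = Ioo (-Real.pi) (-ε) ∪ Ioo ε Real.pi := by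
    ext η
    simp only [mem_setOf_eq, lt_abs, abs_lt, mem_union, mem_Ioo]
    constructor
    · rintro ⟨h1 | h1, h2, h3⟩
      · right; exact ⟨h1, h3⟩
      · left; exact ⟨h2, by linarith⟩
    · rintro (⟨h1, h2⟩ | ⟨h1, h2⟩)
      · exact ⟨Or.inr (by linarith), by linarith, by linarith⟩
      · exact ⟨Or.inl h1, by linarith, by linarith⟩
  -- integrability of w on the two pieces
  have hcont : ∀ a b : ℝ, (∀ η ∈ Icc a b, Real.sin (η / 2) ≠ 0) →
      IntegrableOn w (Ioo a b) volume := by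
    intro a b hne
    apply (ContinuousOn.integrableOn_compact isCompact_Icc ?_).mono_set Ioo_subset_Icc_self
    apply ContinuousOn.div
    · exact (continuous_const.sub (hu.comp (continuous_const.sub continuous_id))).continuousOn
    · exact ((Real.continuous_sin.comp (continuous_id.div_const 2)).pow 2).continuousOn
    · intro η hη
      exact pow_ne_zero 2 (hne η hη)
  have hne1 : ∀ η ∈ Icc (-Real.pi) (-ε), Real.sin (η / 2) ≠ 0 := by
    intro η hη
    exact sin_half_ne (by rintro rfl; exact absurd hη.2 (by simpa using hε)) (by
      rw [abs_le]; constructor <;> [linarith [hη.1]; linarith [hη.2]])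
  have hne2 : ∀ η ∈ Icc ε Real.pi, Real.sin (η / 2) ≠ 0 := by
    intro η hη
    exact sin_half_ne (by rintro rfl; exact absurd hη.1 (by simpa using hε)) (by
      rw [abs_le]; constructor <;> [linarith [hη.1]; linarith [hη.2]])
  have hi1 := hcont _ _ hne1
  have hi2 := hcont _ _ hne2
  have hdisj : Disjoint (Ioo (-Real.pi) (-ε)) (Ioo ε Real.pi) := by
    apply Set.disjoint_left.mpr
    rintro η ⟨_, h2⟩ ⟨h3, _⟩
    linarith
  rw [pvIntegralT, hset, setIntegral_union hdisj measurableSet_Ioo hi1 hi2]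
  have e1 : ∫ η in Ioo (-Real.pi) (-ε), w η = ∫ η in ε..Real.pi, w (-η) := by
    rw [intervalIntegral.integral_comp_neg, intervalIntegral.integral_of_le (by linarith),
      integral_Ioc_eq_integral_Ioo]
  have e2 : ∫ η in Ioo ε Real.pi, w η = ∫ η in ε..Real.pi, w η := by
    rw [intervalIntegral.integral_of_le (by linarith), integral_Ioc_eq_integral_Ioo]
  rw [e1, e2, ← intervalIntegral.integral_add]
  · congr 1
    apply intervalIntegral.integral_congr
    intro η _
    show w (-η) + w η = symInt u x η
    simp only [hw, symInt, neg_div, Real.sin_neg, neg_sq, sub_neg_eq_add]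
    rw [← add_div]
    ring_nf
  · apply ContinuousOn.intervalIntegrable
    rw [uIcc_of_le (by linarith)]
    apply ContinuousOn.div
    · exact (continuous_const.sub (hu.comp (continuous_const.sub continuous_neg))).comp
        continuous_id |>.continuousOn
    · exact (((Real.continuous_sin.comp ((continuous_neg).div_const 2)).pow 2)).continuousOn
    · intro η hη
      apply pow_ne_zero
      rw [neg_div, Real.sin_neg, neg_ne_zero]
      exact hne2 η hη
  · apply ContinuousOn.intervalIntegrable
    rw [uIcc_of_le (by linarith)]
    apply ContinuousOn.div
    · exact (continuous_const.sub (hu.comp (continuous_const.sub continuous_id))).continuousOn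
    · exact ((Real.continuous_sin.comp (continuous_id.div_const 2)).pow 2).continuousOn
    · intro η hη
      exact pow_ne_zero 2 (hne2 η hη)

lemma periodic_deriv' {f : ℝ → ℝ} {c : ℝ} (h : Function.Periodic f c) :
    Function.Periodic (deriv f) c := fun x => by
  have h2 : (fun y => f (y + c)) = f := funext h
  rw [← deriv_comp_add_const, h2]

lemma periodic_bound {g : ℝ → ℝ} (hg : Continuous g)
    (hp : Function.Periodic g (2 * Real.pi)) : ∃ M : ℝ, 0 ≤ M ∧ ∀ x, |g x| ≤ M := by
  obtain ⟨C, hC⟩ := (isCompact_Icc (a := (0:ℝ))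
    (b := 2 * Real.pi)).exists_bound_of_continuousOn hg.continuousOn
  refine ⟨max C 0, le_max_right _ _, fun x => ?_⟩
  obtain ⟨y, hy, hxy⟩ := hp.exists_mem_Ico₀ Real.two_pi_pos x
  rw [hxy]
  exact le_trans (by simpa [Real.norm_eq_abs] using hC y (Ico_subset_Icc_self hy))
    (le_max_left _ _)

lemma symInt_pv_bound {u : ℝ → ℝ} (hu : ContDiff ℝ ∞ u)
    (hp : Function.Periodic u (2 * Real.pi)) :
    ∃ M : ℝ, 0 ≤ M ∧ (∀ x η, η ∈ Ioc (0:ℝ) Real.pi → |symInt u x η| ≤ M) ∧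
      (∀ x ε, 0 < ε → ε < Real.pi → |pvIntegralT u x ε| ≤ M) := by
  have hπ := Real.pi_pos
  have hd : Differentiable ℝ u := hu.differentiable (by simp)
  have hu' : ContDiff ℝ ∞ (deriv u) := (contDiff_infty_iff_deriv.mp hu).2
  have hd' : Differentiable ℝ (deriv u) := hu'.differentiable (by simp)
  have hu''c : Continuous (deriv (deriv u)) := (contDiff_infty_iff_deriv.mp hu').2.continuous
  have hp'' : Function.Periodic (deriv (deriv u)) (2 * Real.pi) :=
    periodic_deriv' (periodic_deriv' hp)
  obtain ⟨M0, hM0, hM0b⟩ := periodic_bound hu''c hp''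
  have hlip : ∀ a b : ℝ, |deriv u b - deriv u a| ≤ M0 * |b - a| := by
    intro a b
    have := Convex.norm_image_sub_le_of_norm_deriv_le (f := deriv u) (s := univ)
      (fun y _ => hd' y) (fun y _ => by simpa [Real.norm_eq_abs] using hM0b y)
      convex_univ (mem_univ a) (mem_univ b)
    simpa [Real.norm_eq_abs] using this
  have hnum : ∀ x η, 0 < η → |2 * u x - u (x - η) - u (x + η)| ≤ 2 * M0 * η ^ 2 := by
    intro x η hη
    set G' : ℝ → ℝ := fun s => deriv u (x - s) - deriv u (x + s) with hG'
    set g : ℝ → ℝ := fun s => 2 * u x - u (x - s) - u (x + s) with hg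
    have hG : ∀ s : ℝ, HasDerivAt g (G' s) s := by
      intro s
      have h1 : HasDerivAt (fun s => u (x - s)) (deriv u (x - s) * (-1)) s :=
        (hd (x - s)).hasDerivAt.comp s ((hasDerivAt_id s).const_sub x)
      have h2 : HasDerivAt (fun s => u (x + s)) (deriv u (x + s) * 1) s :=
        (hd (x + s)).hasDerivAt.comp s ((hasDerivAt_id s).const_add x)
      have := ((hasDerivAt_const s (2 * u x)).sub h1).sub h2
      refine this.congr_deriv ?_
      ring
    have hGc : Continuous G' :=
      (hu'.continuous.comp (continuous_const.sub continuous_id)).sub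
        (hu'.continuous.comp (continuous_const.add continuous_id))
    have hFTC : ∫ s in (0:ℝ)..η, G' s = g η - g 0 :=
      intervalIntegral.integral_eq_sub_of_hasDerivAt (fun s _ => hG s)
        (hGc.intervalIntegrable 0 η)
    have hg0 : g 0 = 0 := by simp only [hg, sub_zero, add_zero]; ring
    have hb : ∀ s ∈ uIoc (0:ℝ) η, ‖G' s‖ ≤ 2 * M0 * η := by
      intro s hs
      rw [uIoc_of_le hη.le] at hs
      have := hlip (x + s) (x - s)
      have habs : |x - s - (x + s)| = 2 * s := by
        rw [show x - s - (x + s) = -(2 * s) by ring, abs_neg, abs_of_nonneg (by linarith [hs.1])]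
      rw [habs] at this
      have : |G' s| ≤ M0 * (2 * s) := this
      have hsη : s ≤ η := hs.2
      calc ‖G' s‖ = |G' s| := rfl
        _ ≤ M0 * (2 * s) := this
        _ ≤ 2 * M0 * η := by nlinarith
    have := intervalIntegral.norm_integral_le_of_norm_le_const hb
    rw [hFTC, hg0, sub_zero] at this
    calc |g η| = ‖g η‖ := rfl
      _ ≤ 2 * M0 * η * |η - 0| := this
      _ = 2 * M0 * η ^ 2 := by rw [sub_zero, abs_of_nonneg hη.le]; ring
  have key : ∀ x η, η ∈ Ioc (0:ℝ) Real.pi → |symInt u x η| ≤ 2 * M0 * Real.pi ^ 2 := by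
    intro x η hη
    have hsin := sin_half_lb hη.1.le hη.2
    have hsinpos : 0 < η / Real.pi := div_pos hη.1 hπ
    have hden : η ^ 2 / Real.pi ^ 2 ≤ Real.sin (η / 2) ^ 2 := by
      calc η ^ 2 / Real.pi ^ 2 = (η / Real.pi) ^ 2 := by ring
        _ ≤ Real.sin (η / 2) ^ 2 := by
          apply sq_le_sq' <;> nlinarith
    rw [symInt, abs_div, abs_of_nonneg (sq_nonneg (Real.sin (η / 2)))]
    have h1 := hnum x η hη.1
    calc |2 * u x - u (x - η) - u (x + η)| / Real.sin (η / 2) ^ 2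
        ≤ (2 * M0 * η ^ 2) / (η ^ 2 / Real.pi ^ 2) :=
          div_le_div₀ (by positivity) h1 (div_pos (pow_pos hη.1 2) (by positivity)) hden
      _ = 2 * M0 * Real.pi ^ 2 := by
          rw [div_div_eq_mul_div, div_eq_iff (pow_ne_zero 2 hη.1.ne')]
          ring
  refine ⟨2 * M0 * Real.pi ^ 2, by positivity, key, ?_⟩
  intro x ε hε hεπ
  rw [pv_eq_sym u hu.continuous hε hεπ]
  have hb : ∀ η ∈ uIoc ε Real.pi, ‖symInt u x η‖ ≤ 2 * M0 * Real.pi ^ 2 := by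
    intro η hη
    rw [uIoc_of_le hεπ.le] at hη
    exact key x η ⟨lt_trans hε hη.1, hη.2⟩
  have hnorm := intervalIntegral.norm_integral_le_of_norm_le_const hb
  rw [abs_mul, abs_of_nonneg (by positivity : (0:ℝ) ≤ 1 / (4 * Real.pi))]
  have habs : |Real.pi - ε| = Real.pi - ε := abs_of_nonneg (by linarith)
  rw [Real.norm_eq_abs, habs] at hnorm
  have h4 : 1 / (4 * Real.pi) * |∫ η in ε..Real.pi, symInt u x η| ≤
      1 / (4 * Real.pi) * (2 * M0 * Real.pi ^ 2 * (Real.pi - ε)) := by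
    apply mul_le_mul_of_nonneg_left hnorm (by positivity)
  refine h4.trans ?_
  rw [div_mul_eq_mul_div, one_mul]
  rw [div_le_iff₀ (by positivity)]
  nlinarith [mul_nonneg hM0 hε.le, sq_nonneg Real.pi, mul_nonneg (mul_nonneg hM0 hπ.le) hπ.le]

lemma symInt_meas (u : ℝ → ℝ) (hu : Continuous u) (x : ℝ) :
    Measurable (fun η => symInt u x η) := by
  apply Measurable.div
  · exact (continuous_const.sub ((hu.comp (continuous_const.sub continuous_id)))).sub
      (hu.comp (continuous_const.add continuous_id)) |>.measurable
  · exact ((Real.continuous_sin.comp (continuous_id.div_const 2)).pow 2).measurable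

lemma symInt_cont_x (u : ℝ → ℝ) (hu : Continuous u) (η : ℝ) :
    Continuous (fun x => symInt u x η) := by
  apply Continuous.div_const
  exact (continuous_const.mul hu |>.sub (hu.comp (continuous_id.sub continuous_const))).sub
    (hu.comp (continuous_id.add continuous_const))

lemma pv_continuous {u : ℝ → ℝ} (hu : ContDiff ℝ ∞ u)
    (hp : Function.Periodic u (2 * Real.pi)) {ε : ℝ} (hε : 0 < ε) (hεπ : ε < Real.pi) :
    Continuous fun x => pvIntegralT u x ε := by
  obtain ⟨M, hM0, hMs, -⟩ := symInt_pv_bound hu hp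
  have he : (fun x => pvIntegralT u x ε)
      = fun x => (1 / (4 * Real.pi)) * ∫ η in ε..Real.pi, symInt u x η :=
    funext fun x => pv_eq_sym u hu.continuous hε hεπ x
  rw [he]
  refine continuous_const.mul ?_
  apply intervalIntegral.continuous_of_dominated_interval (bound := fun _ => M)
  · intro x
    exact (symInt_meas u hu.continuous x).aestronglyMeasurable
  · intro x
    filter_upwards with η hη
    rw [uIoc_of_le hεπ.le] at hη
    exact hMs x η ⟨lt_trans hε hη.1, hη.2⟩
  · exact intervalIntegrable_const
  · filter_upwards with η _
    exact symInt_cont_x u hu.continuous η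

/-- Fubini for continuous integrands on rectangles. -/

lemma interval_swap {a b c d : ℝ} (hab : a ≤ b) (hcd : c ≤ d) {G : ℝ → ℝ → ℝ}
    (hG : ContinuousOn (fun p : ℝ × ℝ => G p.1 p.2) (Icc a b ×ˢ Icc c d)) :
    ∫ x in a..b, ∫ η in c..d, G x η = ∫ η in c..d, ∫ x in a..b, G x η := by
  have hint : IntegrableOn (fun p : ℝ × ℝ => G p.1 p.2) (Ioc a b ×ˢ Ioc c d) volume :=
    (hG.integrableOn_compact (isCompact_Icc.prod isCompact_Icc)).mono_set
      (prod_mono Ioc_subset_Icc_self Ioc_subset_Icc_self)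
  have hint2 : Integrable (Function.uncurry G)
      ((volume.restrict (Ioc a b)).prod (volume.restrict (Ioc c d))) := by
    rwa [Measure.prod_restrict]
  have := integral_integral_swap hint2
  rw [intervalIntegral.integral_of_le hab, intervalIntegral.integral_of_le hcd]
  simp_rw [intervalIntegral.integral_of_le hcd, intervalIntegral.integral_of_le hab]
  exact this

/-- Integration by parts against a periodic test function. -/

lemma ibp_periodic {v φ φ' : ℝ → ℝ} (hv : ContDiff ℝ ∞ v)
    (hpv : Function.Periodic v (2 * Real.pi))
    (hφ : ∀ x, HasDerivAt φ (φ' x) x) (hφc : Continuous φ')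
    (hpφ : Function.Periodic φ (2 * Real.pi)) :
    ∫ x in (-Real.pi)..Real.pi, deriv v x * φ x
      = - ∫ x in (-Real.pi)..Real.pi, v x * φ' x := by
  have hπ := Real.pi_pos
  have hd : Differentiable ℝ v := hv.differentiable (by simp)
  have hv' : Continuous (deriv v) := (contDiff_infty_iff_deriv.mp hv).2.continuous
  have hφd : Differentiable ℝ φ := fun x => (hφ x).differentiableAt
  have hφcont : Continuous φ := hφd.continuous
  have key := intervalIntegral.integral_deriv_mul_eq_sub
    (a := -Real.pi) (b := Real.pi) (u := v) (v := φ) (u' := deriv v) (v' := φ')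
    (fun x _ => (hd x).hasDerivAt) (fun x _ => hφ x)
    (hv'.intervalIntegrable _ _) (hφc.intervalIntegrable _ _)
  have hb : v Real.pi * φ Real.pi - v (-Real.pi) * φ (-Real.pi) = 0 := by
    have h1 : v Real.pi = v (-Real.pi) := by
      have := hpv (-Real.pi); rw [show -Real.pi + 2 * Real.pi = Real.pi by ring] at this
      exact this
    have h2 : φ Real.pi = φ (-Real.pi) := by
      have := hpφ (-Real.pi); rw [show -Real.pi + 2 * Real.pi = Real.pi by ring] at this
      exact this
    rw [h1, h2]; ring
  rw [hb] at key
  have := intervalIntegral.integral_add (μ := volume)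
    ((hv'.mul hφcont).intervalIntegrable (a := -Real.pi) (b := Real.pi))
    ((hd.continuous.mul hφc).intervalIntegrable (a := -Real.pi) (b := Real.pi))
  simp only [Pi.mul_apply] at this
  rw [key] at this
  linarith [this]

lemma symInt_joint_cont {u : ℝ → ℝ} (hu : Continuous u) {ε : ℝ} (hε : 0 < ε)
    (hεπ : ε ≤ Real.pi) :
    ContinuousOn (fun p : ℝ × ℝ => symInt u p.1 p.2)
      (Icc (-Real.pi) Real.pi ×ˢ Icc ε Real.pi) := by
  apply ContinuousOn.div
  · exact ((continuous_const.mul (hu.comp continuous_fst)).sub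
      (hu.comp (continuous_fst.sub continuous_snd))).sub
      (hu.comp (continuous_fst.add continuous_snd)) |>.continuousOn
  · exact ((Real.continuous_sin.comp (continuous_snd.div_const 2)).pow 2).continuousOn
  · rintro ⟨x, η⟩ ⟨-, hη⟩
    exact pow_ne_zero 2 (sin_half_ne (by rintro rfl; exact absurd hη.1 (not_le.mpr hε))
      (by rw [abs_le]; exact ⟨by linarith [hη.1], hη.2⟩))

lemma spatial_identity {u : ℝ → ℝ} (hu : ContDiff ℝ ∞ u)
    (hp : Function.Periodic u (2 * Real.pi))
    {Lu Lu' : ℝ → ℝ} (hLu : ∀ x, HasPVLambdaT u x (Lu x))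
    (hLu' : ∀ x, HasPVLambdaT (deriv u) x (Lu' x))
    (hLuc : Continuous Lu) (hLu'c : Continuous Lu') :
    ∫ x in (-Real.pi)..Real.pi, deriv (deriv u) x * Lu x
      = - ∫ x in (-Real.pi)..Real.pi, deriv u x * Lu' x := by
  have hπ := Real.pi_pos
  have hd : Differentiable ℝ u := hu.differentiable (by simp)
  have hu' : ContDiff ℝ ∞ (deriv u) := (contDiff_infty_iff_deriv.mp hu).2
  have hd' : Differentiable ℝ (deriv u) := hu'.differentiable (by simp)
  have hu'' : ContDiff ℝ ∞ (deriv (deriv u)) := (contDiff_infty_iff_deriv.mp hu').2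
  have hp' := periodic_deriv' hp
  have hp'' := periodic_deriv' hp'
  obtain ⟨M1, hM10, -, hM1⟩ := symInt_pv_bound hu hp
  obtain ⟨M2, hM20, -, hM2⟩ := symInt_pv_bound hu' hp'
  obtain ⟨K1, hK10, hK1⟩ := periodic_bound hu''.continuous hp''
  obtain ⟨K2, hK20, hK2⟩ := periodic_bound hu'.continuous hp'
  set c : ℝ := 1 / (4 * Real.pi) with hc
  -- inner integration-by-parts identity, valid for every η
  have hinner : ∀ η : ℝ, (∫ x in (-Real.pi)..Real.pi, deriv (deriv u) x * symInt u x η)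
      = - ∫ x in (-Real.pi)..Real.pi, deriv u x * symInt (deriv u) x η := by
    intro η
    set k : ℝ := (Real.sin (η / 2) ^ 2)⁻¹ with hk
    set φ : ℝ → ℝ := fun x => 2 * u x - u (x - η) - u (x + η) with hφ
    set φ' : ℝ → ℝ := fun x => 2 * deriv u x - deriv u (x - η) - deriv u (x + η) with hφ'
    have hder : ∀ x, HasDerivAt φ (φ' x) x := by
      intro x
      have h1 : HasDerivAt (fun x => u (x - η)) (deriv u (x - η) * 1) x :=
        (hd (x - η)).hasDerivAt.comp x ((hasDerivAt_id x).sub_const η)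
      have h2 : HasDerivAt (fun x => u (x + η)) (deriv u (x + η) * 1) x :=
        (hd (x + η)).hasDerivAt.comp x ((hasDerivAt_id x).add_const η)
      have h0 : HasDerivAt (fun x => 2 * u x) (2 * deriv u x) x :=
        (hd x).hasDerivAt.const_mul 2
      have := (h0.sub h1).sub h2
      refine this.congr_deriv ?_
      simp only [hφ']
      ring
    have hφ'c : Continuous φ' :=
      ((continuous_const.mul hu'.continuous).sub
        (hu'.continuous.comp (continuous_id.sub continuous_const))).sub
        (hu'.continuous.comp (continuous_id.add continuous_const))
    have hpφ : Function.Periodic φ (2 * Real.pi) := by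
      intro x
      simp only [hφ]
      rw [hp x, show x + 2 * Real.pi - η = x - η + 2 * Real.pi by ring, hp (x - η),
        show x + 2 * Real.pi + η = x + η + 2 * Real.pi by ring, hp (x + η)]
    have key := ibp_periodic hu' hp' hder hφ'c hpφ
    have e1 : (fun x => deriv (deriv u) x * symInt u x η)
        = fun x => (deriv (deriv u) x * φ x) * k := by
      funext x
      rw [symInt, div_eq_mul_inv]
      ring
    have e2 : (fun x => deriv u x * symInt (deriv u) x η)
        = fun x => (deriv u x * φ' x) * k := by
      funext x
      rw [symInt, div_eq_mul_inv]
      ring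
    rw [e1, e2, intervalIntegral.integral_mul_const, intervalIntegral.integral_mul_const,
      key]
    ring
  -- the identity for truncated integrals
  have hAB : ∀ ε ∈ Ioo (0:ℝ) Real.pi,
      (∫ x in (-Real.pi)..Real.pi, deriv (deriv u) x * pvIntegralT u x ε)
        = - ∫ x in (-Real.pi)..Real.pi, deriv u x * pvIntegralT (deriv u) x ε := by
    intro ε hε
    have h1 : (fun x => deriv (deriv u) x * pvIntegralT u x ε)
        = fun x => c * ∫ η in ε..Real.pi, deriv (deriv u) x * symInt u x η := by
      funext x
      rw [pv_eq_sym u hu.continuous hε.1 hε.2, intervalIntegral.integral_const_mul]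
      ring
    have h2 : (fun x => deriv u x * pvIntegralT (deriv u) x ε)
        = fun x => c * ∫ η in ε..Real.pi, deriv u x * symInt (deriv u) x η := by
      funext x
      rw [pv_eq_sym (deriv u) hu'.continuous hε.1 hε.2,
        intervalIntegral.integral_const_mul]
      ring
    rw [h1, h2, intervalIntegral.integral_const_mul, intervalIntegral.integral_const_mul]
    have hsw1 : (∫ x in (-Real.pi)..Real.pi, ∫ η in ε..Real.pi,
          deriv (deriv u) x * symInt u x η)
        = ∫ η in ε..Real.pi, ∫ x in (-Real.pi)..Real.pi,
          deriv (deriv u) x * symInt u x η :=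
      interval_swap (by linarith) hε.2.le
        (((hu''.continuous.comp continuous_fst).continuousOn).mul
          (symInt_joint_cont hu.continuous hε.1 hε.2.le))
    have hsw2 : (∫ x in (-Real.pi)..Real.pi, ∫ η in ε..Real.pi,
          deriv u x * symInt (deriv u) x η)
        = ∫ η in ε..Real.pi, ∫ x in (-Real.pi)..Real.pi,
          deriv u x * symInt (deriv u) x η :=
      interval_swap (by linarith) hε.2.le
        (((hu'.continuous.comp continuous_fst).continuousOn).mul
          (symInt_joint_cont hu'.continuous hε.1 hε.2.le))
    rw [hsw1, hsw2]
    rw [show (∫ η in ε..Real.pi, ∫ x in (-Real.pi)..Real.pi,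
          deriv (deriv u) x * symInt u x η)
        = ∫ η in ε..Real.pi, -(∫ x in (-Real.pi)..Real.pi,
          deriv u x * symInt (deriv u) x η) from
      intervalIntegral.integral_congr fun η _ => hinner η]
    rw [intervalIntegral.integral_neg]
    ring
  -- limits
  have hev : Ioo (0:ℝ) Real.pi ∈ nhdsWithin (0:ℝ) (Ioi 0) :=
    Ioo_mem_nhdsGT_of_mem ⟨le_refl 0, hπ⟩
  have hlim1 : Tendsto (fun ε => ∫ x in (-Real.pi)..Real.pi,
        deriv (deriv u) x * pvIntegralT u x ε) (nhdsWithin 0 (Ioi 0))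
      (nhds (∫ x in (-Real.pi)..Real.pi, deriv (deriv u) x * Lu x)) := by
    simp_rw [intervalIntegral.integral_of_le (by linarith : -Real.pi ≤ Real.pi)]
    apply tendsto_integral_filter_of_dominated_convergence (bound := fun _ => K1 * M1)
    · filter_upwards [hev] with ε hε
      exact (hu''.continuous.mul (pv_continuous hu hp hε.1 hε.2)).aestronglyMeasurable
    · filter_upwards [hev] with ε hε
      filter_upwards with x
      rw [Real.norm_eq_abs, abs_mul]
      exact mul_le_mul (hK1 x) (hM1 x ε hε.1 hε.2) (abs_nonneg _) hK10
    · exact (integrableOn_const measure_Ioc_lt_top.ne).integrable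
    · filter_upwards with x
      exact (hLu x).const_mul (deriv (deriv u) x)
  have hlim2 : Tendsto (fun ε => ∫ x in (-Real.pi)..Real.pi,
        deriv u x * pvIntegralT (deriv u) x ε) (nhdsWithin 0 (Ioi 0))
      (nhds (∫ x in (-Real.pi)..Real.pi, deriv u x * Lu' x)) := by
    simp_rw [intervalIntegral.integral_of_le (by linarith : -Real.pi ≤ Real.pi)]
    apply tendsto_integral_filter_of_dominated_convergence (bound := fun _ => K2 * M2)
    · filter_upwards [hev] with ε hε
      exact (hu'.continuous.mul (pv_continuous hu' hp' hε.1 hε.2)).aestronglyMeasurable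
    · filter_upwards [hev] with ε hε
      filter_upwards with x
      rw [Real.norm_eq_abs, abs_mul]
      exact mul_le_mul (hK2 x) (hM2 x ε hε.1 hε.2) (abs_nonneg _) hK20
    · exact (integrableOn_const measure_Ioc_lt_top.ne).integrable
    · filter_upwards with x
      exact (hLu' x).const_mul (deriv u x)
  have hlim2' : Tendsto (fun ε => -(∫ x in (-Real.pi)..Real.pi,
        deriv u x * pvIntegralT (deriv u) x ε)) (nhdsWithin 0 (Ioi 0))
      (nhds (-(∫ x in (-Real.pi)..Real.pi, deriv u x * Lu' x))) := hlim2.neg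
  have heq : (fun ε => ∫ x in (-Real.pi)..Real.pi, deriv (deriv u) x * pvIntegralT u x ε)
      =ᶠ[nhdsWithin 0 (Ioi 0)] (fun ε => -(∫ x in (-Real.pi)..Real.pi,
        deriv u x * pvIntegralT (deriv u) x ε)) := by
    filter_upwards [hev] with ε hε
    exact hAB ε hε
  exact tendsto_nhds_unique (hlim1) (hlim2'.congr' heq.symm)

/-- Derivative along a curve of an evaluated operator-valued map. -/

lemma hasDerivAt_clm_eval {G : ℝ × ℝ → (ℝ × ℝ) →L[ℝ] ℝ} {p : ℝ × ℝ}
    (hG : DifferentiableAt ℝ G p) (w : ℝ × ℝ) {c : ℝ → ℝ × ℝ} {c' : ℝ × ℝ} {r : ℝ}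
    (hc : HasDerivAt c c' r) (hcp : c r = p) :
    HasDerivAt (fun s => G (c s) w) (fderiv ℝ G p c' w) r := by
  have h1 : HasFDerivAt (fun q => G q w)
      ((ContinuousLinearMap.apply ℝ ℝ w).comp (fderiv ℝ G p)) p :=
    (ContinuousLinearMap.apply ℝ ℝ w).hasFDerivAt.comp p hG.hasFDerivAt
  rw [← hcp] at h1
  have h2 := h1.comp_hasDerivAt r hc
  rw [hcp] at h2
  exact h2

/-- Continuity of a parametric interval integral over a compact parameter set. -/

lemma param_cont {G : ℝ → ℝ → ℝ} {a b : ℝ} (hab : a ≤ b) {s : Set ℝ} (hs : IsCompact s)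
    (hG : ContinuousOn (fun p : ℝ × ℝ => G p.1 p.2) (univ ×ˢ s)) :
    ContinuousOn (fun t => ∫ x in a..b, G x t) s := by
  rcases isEmpty_or_nonempty (s : Set ℝ) with h | h
  · intro t hts; exact absurd hts (by simpa using h.elim' ⟨t, hts⟩)
  obtain ⟨C, hC⟩ := (isCompact_Icc (a := a) (b := b)).prod hs
    |>.exists_bound_of_continuousOn (hG.mono (prod_mono (subset_univ _) le_rfl))
  intro t₀ ht₀
  have key : Tendsto (fun t => ∫ x in Ioc a b, G x t) (nhdsWithin t₀ s)
      (nhds (∫ x in Ioc a b, G x t₀)) := by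
    apply tendsto_integral_filter_of_dominated_convergence (bound := fun _ => |C|)
    · filter_upwards [self_mem_nhdsWithin] with t hts
      have : ContinuousOn (fun x => G x t) univ := by
        exact hG.comp ((continuous_id.prodMk continuous_const).continuousOn)
          (fun x _ => ⟨mem_univ _, hts⟩)
      exact ((continuousOn_univ.mp this).measurable).aestronglyMeasurable
    · filter_upwards [self_mem_nhdsWithin] with t hts
      filter_upwards [ae_restrict_mem measurableSet_Ioc] with x hx
      have := hC (x, t) ⟨Ioc_subset_Icc_self hx, hts⟩
      exact this.trans (le_abs_self C)
    · exact (integrableOn_const measure_Ioc_lt_top.ne).integrable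
    · filter_upwards [ae_restrict_mem measurableSet_Ioc] with x hx
      have h1 : ContinuousWithinAt (fun p : ℝ × ℝ => G p.1 p.2) (univ ×ˢ s) (x, t₀) :=
        hG (x, t₀) ⟨mem_univ _, ht₀⟩
      have h2 : Tendsto (fun t => ((x : ℝ), t)) (nhdsWithin t₀ s)
          (nhdsWithin (x, t₀) (univ ×ˢ s)) := by
        apply tendsto_nhdsWithin_of_tendsto_nhds_of_eventually_within
        · exact ((continuous_const.prodMk continuous_id).tendsto t₀).mono_left
            nhdsWithin_le_nhds
        · filter_upwards [self_mem_nhdsWithin] with r hr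
          exact ⟨mem_univ _, hr⟩
      exact h1.tendsto.comp h2
  have : ContinuousWithinAt (fun t => ∫ x in Ioc a b, G x t) s t₀ := key
  simpa [intervalIntegral.integral_of_le hab] using this

/-- the energy balance for `∫(1 + (1/6)(∂_x f)²)(∂_x f)² dx` under the
deep-water model `∂_t f = −Λf/(1+(∂_x f)²)`. -/
theorem quartic_energy_balance
    (T : ℝ) (hT : 0 < T) (f Λf Λfx : ℝ → ℝ → ℝ)
    -- 2π-periodic in x
    (hper : ∀ x : ℝ, ∀ t ∈ Icc (0:ℝ) T, f (x + 2 * Real.pi) t = f x t)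
    -- f jointly smooth
    (hf : ContDiffOn ℝ (⊤ : ℕ∞) (fun p : ℝ × ℝ => f p.1 p.2) (univ ×ˢ Icc 0 T))
    -- Λf and Λ∂_x f exist in the principal-value sense and are jointly continuous
    (hpv : ∀ x : ℝ, ∀ t ∈ Icc (0:ℝ) T, HasPVLambdaT (fun y => f y t) x (Λf x t))
    (hpvx : ∀ x : ℝ, ∀ t ∈ Icc (0:ℝ) T,
      HasPVLambdaT (fun y => deriv (fun z => f z t) y) x (Λfx x t))
    (hΛc : ContinuousOn (fun p : ℝ × ℝ => Λf p.1 p.2) (univ ×ˢ Icc 0 T))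
    (hΛxc : ContinuousOn (fun p : ℝ × ℝ => Λfx p.1 p.2) (univ ×ˢ Icc 0 T))
    -- the equation ∂_t f = −Λf/(1+(∂_x f)²) holds pointwise
    (heq : ∀ x : ℝ, ∀ t ∈ Icc (0:ℝ) T,
      HasDerivWithinAt (fun s => f x s)
        (-(Λf x t) / (1 + (deriv (fun y => f y t) x) ^ 2)) (Icc 0 T) t) :
    ∀ t ∈ Icc (0:ℝ) T,
      (∫ x in (-Real.pi)..Real.pi, (deriv (fun y => f y t) x) ^ 2)
          + (1 / 6) * (∫ x in (-Real.pi)..Real.pi, (deriv (fun y => f y t) x) ^ 4)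
          + 2 * ∫ s in (0:ℝ)..t, ∫ x in (-Real.pi)..Real.pi,
              deriv (fun y => f y s) x * Λfx x s
        = (∫ x in (-Real.pi)..Real.pi, (deriv (fun y => f y 0) x) ^ 2)
          + (1 / 6) * ∫ x in (-Real.pi)..Real.pi, (deriv (fun y => f y 0) x) ^ 4 := by
  have hπ := Real.pi_pos
  intro t ht
  set F : ℝ × ℝ → ℝ := fun p => f p.1 p.2 with hFdef
  set S : Set (ℝ × ℝ) := univ ×ˢ Icc 0 T with hSdef
  have hfS : ContDiffOn ℝ ∞ F S := hf.of_le (by simp)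
  have hUD : UniqueDiffOn ℝ S := uniqueDiffOn_univ.prod (uniqueDiffOn_Icc hT)
  have h1w : (1 : WithTop ℕ∞) ≤ ∞ := by exact_mod_cast le_top
  have h1ω : (1 : WithTop ℕ∞) ≤ ω := le_top
  have h1ω' : (ω : WithTop ℕ∞) ≠ 0 := by simp
  have hslice : ∀ s ∈ Icc (0:ℝ) T, ContDiff ℝ ∞ (fun y => f y s) := by
    intro s hs
    rw [← contDiffOn_univ]
    exact hfS.comp ((contDiff_id.prodMk contDiff_const).contDiffOn)
      (fun y _ => ⟨mem_univ _, hs⟩)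
  have hper_s : ∀ s ∈ Icc (0:ℝ) T, Function.Periodic (fun y => f y s) (2 * Real.pi) :=
    fun s hs x => hper x s hs
  -- the spatial derivative, jointly continuous up to the boundary
  have hg_eqW : ∀ x : ℝ, ∀ s ∈ Icc (0:ℝ) T,
      HasDerivAt (fun y => f y s) (fderivWithin ℝ F S (x, s) (1, 0)) x := by
    intro x s hs
    have hmem : ((x : ℝ), s) ∈ S := ⟨mem_univ _, hs⟩
    have hdF := (hfS.differentiableOn (by simp) (x, s) hmem).hasFDerivWithinAt
    have hι : HasDerivAt (fun y : ℝ => ((y : ℝ), s)) ((1 : ℝ), (0 : ℝ)) x :=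
      (hasDerivAt_id x).prodMk (hasDerivAt_const x s)
    have := hdF.comp_hasDerivWithinAt x (hι.hasDerivWithinAt (s := univ))
      (fun y _ => (⟨mem_univ _, hs⟩ : ((y : ℝ), s) ∈ S))
    rw [hasDerivWithinAt_univ] at this
    exact this
  have hg_eq : ∀ x : ℝ, ∀ s ∈ Icc (0:ℝ) T,
      deriv (fun y => f y s) x = fderivWithin ℝ F S (x, s) (1, 0) :=
    fun x s hs => (hg_eqW x s hs).deriv
  have hgc : ContinuousOn (fun p : ℝ × ℝ => deriv (fun y => f y p.2) p.1) S := by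
    have h1 : ContinuousOn (fderivWithin ℝ F S) S :=
      hfS.continuousOn_fderivWithin hUD h1w
    have h2 : ContinuousOn (fun p : ℝ × ℝ => fderivWithin ℝ F S p ((1 : ℝ), (0 : ℝ))) S :=
      h1.clm_apply continuousOn_const
    apply h2.congr
    intro p hp
    exact hg_eq p.1 p.2 hp.2
  -- interior regularity
  have hFat : ∀ x : ℝ, ∀ s ∈ Ioo (0:ℝ) T, ContDiffAt ℝ (⊤ : ℕ∞) F (x, s) := by
    intro x s hs
    exact hf.contDiffAt (prod_mem_nhds univ_mem (Icc_mem_nhds hs.1 hs.2))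
  have hD1 : ∀ x : ℝ, ∀ s ∈ Ioo (0:ℝ) T, ContDiffAt ℝ ∞ (fderiv ℝ F) (x, s) := by
    intro x s hs
    exact (hFat x s hs).fderiv_right (by simp)
  have hD2 : ∀ x : ℝ, ∀ s ∈ Ioo (0:ℝ) T,
      ContDiffAt ℝ 1 (fderiv ℝ (fderiv ℝ F)) (x, s) := by
    intro x s hs
    exact (hD1 x s hs).fderiv_right (by
      rw [show ((1:WithTop ℕ∞) + 1) = ((2:ℕ∞) : WithTop ℕ∞) by rfl,
        show (∞ : WithTop ℕ∞) = ((⊤:ℕ∞) : WithTop ℕ∞) by rfl]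
      exact WithTop.coe_le_coe.mpr le_top)
  -- time derivative of the spatial derivative
  set gt : ℝ → ℝ → ℝ :=
    fun x s => fderiv ℝ (fderiv ℝ F) (x, s) ((0 : ℝ), (1 : ℝ)) ((1 : ℝ), (0 : ℝ)) with hgtdef
  have hg_eq_int : ∀ x : ℝ, ∀ s ∈ Ioo (0:ℝ) T,
      deriv (fun y => f y s) x = fderiv ℝ F (x, s) (1, 0) := by
    intro x s hs
    have h1 : HasDerivAt (fun y => f y s) (fderiv ℝ F (x, s) (1, 0)) x :=
      by have h := ((hFat x s hs).differentiableAt (by simp)).hasFDerivAt.comp_hasDerivAt x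
           ((hasDerivAt_id x).prodMk (hasDerivAt_const x s)); exact h
    exact h1.deriv
  have hgt_deriv : ∀ x : ℝ, ∀ s ∈ Ioo (0:ℝ) T,
      HasDerivAt (fun r => deriv (fun y => f y r) x) (gt x s) s := by
    intro x s hs
    have hc : HasDerivAt (fun r : ℝ => ((x : ℝ), r)) ((0 : ℝ), (1 : ℝ)) s :=
      (hasDerivAt_const s x).prodMk (hasDerivAt_id s)
    have h1 : HasDerivAt (fun r => fderiv ℝ F (x, r) ((1 : ℝ), (0 : ℝ)))
        (fderiv ℝ (fderiv ℝ F) (x, s) ((0 : ℝ), (1 : ℝ)) ((1 : ℝ), (0 : ℝ))) s :=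
      hasDerivAt_clm_eval ((hD1 x s hs).differentiableAt (by simp)) _ hc rfl
    apply h1.congr_of_eventuallyEq
    filter_upwards [Ioo_mem_nhds hs.1 hs.2] with r hr
    exact hg_eq_int x r hr
  -- joint continuity of gt on the interior
  have hgtc : ∀ x : ℝ, ∀ s ∈ Ioo (0:ℝ) T,
      ContinuousAt (fun p : ℝ × ℝ => gt p.1 p.2) (x, s) := by
    intro x s hs
    have h1 : ContDiffAt ℝ 1 (fun p : ℝ × ℝ => fderiv ℝ (fderiv ℝ F) p
        ((0 : ℝ), (1 : ℝ)) ((1 : ℝ), (0 : ℝ))) (x, s) :=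
      ((hD2 x s hs).clm_apply contDiffAt_const).clm_apply contDiffAt_const
    exact h1.continuousAt
  -- Clairaut: the x-derivative of the time derivative of f is gt
  have hsym : ∀ x : ℝ, ∀ s ∈ Ioo (0:ℝ) T,
      HasDerivAt (fun y => fderiv ℝ F (y, s) ((0 : ℝ), (1 : ℝ))) (gt x s) x := by
    intro x s hs
    have hc : HasDerivAt (fun y : ℝ => ((y : ℝ), s)) ((1 : ℝ), (0 : ℝ)) x :=
      (hasDerivAt_id x).prodMk (hasDerivAt_const x s)
    have h1 := hasDerivAt_clm_eval ((hD1 x s hs).differentiableAt (by simp))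
      ((0 : ℝ), (1 : ℝ)) hc rfl
    have hev : ∀ᶠ y in nhds ((x : ℝ), s), HasFDerivAt F (fderiv ℝ F y) y := by
      filter_upwards [prod_mem_nhds univ_mem (Ioo_mem_nhds hs.1 hs.2)] with y hy
      exact ((hFat y.1 y.2 hy.2).differentiableAt (by simp)).hasFDerivAt
    have hDd : HasFDerivAt (fderiv ℝ F) (fderiv ℝ (fderiv ℝ F) (x, s)) (x, s) :=
      ((hD1 x s hs).differentiableAt (by simp)).hasFDerivAt
    have hsm := second_derivative_symmetric_of_eventually hev hDd
      ((1 : ℝ), (0 : ℝ)) ((0 : ℝ), (1 : ℝ))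
    rw [hsm] at h1
    exact h1
  -- identification of the time derivative with the equation's RHS
  have hft : ∀ x : ℝ, ∀ s ∈ Ioo (0:ℝ) T,
      -(Λf x s) / (1 + (deriv (fun y => f y s) x) ^ 2)
        = fderiv ℝ F (x, s) ((0 : ℝ), (1 : ℝ)) := by
    intro x s hs
    have h1 : HasDerivAt (fun r => f x r) (fderiv ℝ F (x, s) ((0 : ℝ), (1 : ℝ))) s :=
      ((hFat x s hs).differentiableAt (by simp)).hasFDerivAt.comp_hasDerivAt s
        ((hasDerivAt_const s x).prodMk (hasDerivAt_id s))
    have h2 : HasDerivAt (fun r => f x r)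
        (-(Λf x s) / (1 + (deriv (fun y => f y s) x) ^ 2)) s :=
      (heq x s (Ioo_subset_Icc_self hs)).hasDerivAt
        (Icc_mem_nhds hs.1 hs.2)
    exact h2.unique h1
  -- periodicity of Λf in x
  have hpv_per : ∀ (u : ℝ → ℝ), Function.Periodic u (2 * Real.pi) →
      ∀ x ε, pvIntegralT u (x + 2 * Real.pi) ε = pvIntegralT u x ε := by
    intro u hu x ε
    unfold pvIntegralT
    congr 1
    have e : (fun η => (u (x + 2 * Real.pi) - u (x + 2 * Real.pi - η)) / Real.sin (η / 2) ^ 2)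
        = fun η => (u x - u (x - η)) / Real.sin (η / 2) ^ 2 := by
      funext η
      rw [hu x, show x + 2 * Real.pi - η = (x - η) + 2 * Real.pi by ring, hu (x - η)]
    rw [e]
  have hΛper : ∀ x : ℝ, ∀ s ∈ Icc (0:ℝ) T, Λf (x + 2 * Real.pi) s = Λf x s := by
    intro x s hs
    have h1 := hpv (x + 2 * Real.pi) s hs
    have h2 := hpv x s hs
    have h1' := h1.congr (fun ε => hpv_per _ (hper_s s hs) x ε)
    exact tendsto_nhds_unique h1' h2
  -- slice continuity of Λf, Λfx
  have hΛc_s : ∀ s ∈ Icc (0:ℝ) T, Continuous fun x => Λf x s := by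
    intro s hs
    rw [← continuousOn_univ]
    exact hΛc.comp ((continuous_id.prodMk continuous_const).continuousOn)
      (fun x _ => ⟨mem_univ _, hs⟩)
  have hΛxc_s : ∀ s ∈ Icc (0:ℝ) T, Continuous fun x => Λfx x s := by
    intro s hs
    rw [← continuousOn_univ]
    exact hΛxc.comp ((continuous_id.prodMk continuous_const).continuousOn)
      (fun x _ => ⟨mem_univ _, hs⟩)
  have hgt_s_cont : ∀ s ∈ Ioo (0:ℝ) T, Continuous (fun x => gt x s) := by
    intro s hs
    rw [continuous_iff_continuousAt]
    intro x
    exact ContinuousAt.comp (f := fun y : ℝ => (y, s)) (g := fun p : ℝ × ℝ => gt p.1 p.2)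
      (hgtc x s hs) ((continuous_id.prodMk continuous_const).continuousAt)
  -- STEP C: the spatial manipulation at fixed interior time
  have hstepC : ∀ s ∈ Ioo (0:ℝ) T,
      (∫ x in (-Real.pi)..Real.pi,
          (2 * deriv (fun y => f y s) x + 2 / 3 * deriv (fun y => f y s) x ^ 3) * gt x s)
        = -2 * ∫ x in (-Real.pi)..Real.pi, deriv (fun y => f y s) x * Λfx x s := by
    intro s hs
    have hsI : s ∈ Icc (0:ℝ) T := Ioo_subset_Icc_self hs
    have hu : ContDiff ℝ ∞ (fun y => f y s) := hslice s hsI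
    have hup : Function.Periodic (fun y => f y s) (2 * Real.pi) := hper_s s hsI
    have hu' : ContDiff ℝ ∞ (deriv (fun y => f y s)) := (contDiff_infty_iff_deriv.mp hu).2
    have hd' : Differentiable ℝ (deriv (fun y => f y s)) := hu'.differentiable (by simp)
    have hu'' : Continuous (deriv (deriv (fun y => f y s))) :=
      (contDiff_infty_iff_deriv.mp hu').2.continuous
    have hup' : Function.Periodic (deriv (fun y => f y s)) (2 * Real.pi) :=
      periodic_deriv' hup
    set h : ℝ → ℝ := fun x => -(Λf x s) / (1 + (deriv (fun y => f y s) x) ^ 2) with hhdef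
    have hh : ∀ x, HasDerivAt h (gt x s) x := by
      intro x
      have e : h = fun y => fderiv ℝ F (y, s) ((0 : ℝ), (1 : ℝ)) :=
        funext fun y => hft y s hs
      rw [e]
      exact hsym x s hs
    have hhc : Continuous h := by
      apply Continuous.div ((hΛc_s s hsI).neg)
        (continuous_const.add (hu'.continuous.pow 2))
      intro x
      simp only [Pi.add_apply, Pi.pow_apply]
      positivity
    have hhper : Function.Periodic h (2 * Real.pi) := by
      intro x
      simp only [hhdef]
      rw [hΛper x s hsI, hup' x]
    set φ : ℝ → ℝ :=
      fun x => 2 * deriv (fun y => f y s) x + 2 / 3 * deriv (fun y => f y s) x ^ 3 with hφdef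
    set φ' : ℝ → ℝ :=
      fun x => (2 + 2 * deriv (fun y => f y s) x ^ 2) * deriv (deriv (fun y => f y s)) x
      with hφ'def
    have hφder : ∀ x, HasDerivAt φ (φ' x) x := by
      intro x
      have h1 : HasDerivAt (deriv (fun y => f y s))
          (deriv (deriv (fun y => f y s)) x) x := (hd' x).hasDerivAt
      have h2 := (h1.const_mul 2).add ((h1.pow 3).const_mul (2 / 3))
      refine h2.congr_deriv ?_
      simp only [hφ'def]
      ring
    have hφc : Continuous φ :=
      (continuous_const.mul hu'.continuous).add
        (continuous_const.mul (hu'.continuous.pow 3))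
    have hφ'c : Continuous φ' :=
      (continuous_const.add (continuous_const.mul (hu'.continuous.pow 2))).mul hu''
    have hφper : Function.Periodic φ (2 * Real.pi) := by
      intro x
      simp only [hφdef]
      rw [hup' x]
    have key := intervalIntegral.integral_deriv_mul_eq_sub
      (a := -Real.pi) (b := Real.pi) (u := φ) (v := h) (u' := φ') (v' := fun x => gt x s)
      (fun x _ => hφder x) (fun x _ => hh x)
      (hφ'c.intervalIntegrable _ _) ((hgt_s_cont s hs).intervalIntegrable _ _)
    have hb0 : φ Real.pi * h Real.pi - φ (-Real.pi) * h (-Real.pi) = 0 := by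
      have e1 : φ Real.pi = φ (-Real.pi) := by
        have := hφper (-Real.pi)
        rw [show -Real.pi + 2 * Real.pi = Real.pi by ring] at this
        exact this
      have e2 : h Real.pi = h (-Real.pi) := by
        have := hhper (-Real.pi)
        rw [show -Real.pi + 2 * Real.pi = Real.pi by ring] at this
        exact this
      rw [e1, e2]; ring
    rw [hb0] at key
    have hadd := intervalIntegral.integral_add (μ := volume)
      ((hφ'c.mul hhc).intervalIntegrable (a := -Real.pi) (b := Real.pi))
      ((hφc.mul (hgt_s_cont s hs)).intervalIntegrable (a := -Real.pi) (b := Real.pi))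
    simp only [Pi.mul_apply] at hadd
    rw [key] at hadd
    -- evaluate ∫ φ' * h
    have he : (fun x => φ' x * h x)
        = fun x => (-2) * (deriv (deriv (fun y => f y s)) x * Λf x s) := by
      funext x
      simp only [hφ'def, hhdef]
      have hpos : (1 : ℝ) + deriv (fun y => f y s) x ^ 2 ≠ 0 := by positivity
      field_simp
    have hΦh : (∫ x in (-Real.pi)..Real.pi, φ' x * h x)
        = (-2) * ∫ x in (-Real.pi)..Real.pi,
            deriv (deriv (fun y => f y s)) x * Λf x s := by
      rw [show (fun x => φ' x * h x) = _ from he, intervalIntegral.integral_const_mul]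
    have hspace := spatial_identity hu hup (Lu := fun x => Λf x s) (Lu' := fun x => Λfx x s)
      (fun x => hpv x s hsI) (fun x => hpvx x s hsI) (hΛc_s s hsI) (hΛxc_s s hsI)
    have goalE : (∫ x in (-Real.pi)..Real.pi, φ x * gt x s)
        = -2 * ∫ x in (-Real.pi)..Real.pi, deriv (fun y => f y s) x * Λfx x s := by
      have h0 : (0:ℝ) = (∫ x in (-Real.pi)..Real.pi, φ' x * h x)
          + ∫ x in (-Real.pi)..Real.pi, φ x * gt x s := hadd
      rw [hΦh] at h0
      rw [hspace] at h0
      linarith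
    exact goalE
  -- derivative of the energy under the integral sign
  have hE' : ∀ s ∈ Ioo (0:ℝ) T,
      HasDerivAt (fun r => ∫ x in (-Real.pi)..Real.pi,
          (deriv (fun y => f y r) x ^ 2 + deriv (fun y => f y r) x ^ 4 / 6))
        (-2 * ∫ x in (-Real.pi)..Real.pi, deriv (fun y => f y s) x * Λfx x s) s := by
    intro s hs
    set δ : ℝ := min s (T - s) / 2 with hδdef
    have hδ : 0 < δ := div_pos (lt_min hs.1 (by linarith [hs.2])) two_pos
    have hδs : δ < s := by
      have h1 := min_le_left s (T - s)
      have : δ ≤ s / 2 := by rw [hδdef]; linarith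
      linarith [hs.1]
    have hδT : s + δ < T := by
      have h2 := min_le_right s (T - s)
      have : δ ≤ (T - s) / 2 := by rw [hδdef]; linarith
      linarith [hs.2]
    have hIccsub : Icc (s - δ) (s + δ) ⊆ Ioo (0:ℝ) T := by
      intro r hr
      exact ⟨by linarith [hr.1], by linarith [hr.2]⟩
    have hballsub : Metric.ball s δ ⊆ Icc (s - δ) (s + δ) := by
      intro r hr
      rw [Metric.mem_ball, Real.dist_eq] at hr
      have := abs_lt.mp hr
      exact ⟨by linarith [this.1], by linarith [this.2]⟩
    set K : Set (ℝ × ℝ) := Icc (-Real.pi) Real.pi ×ˢ Icc (s - δ) (s + δ) with hKdef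
    have hKS : K ⊆ S := fun p hp =>
      ⟨mem_univ _, Ioo_subset_Icc_self (hIccsub hp.2)⟩
    have hKc : IsCompact K := isCompact_Icc.prod isCompact_Icc
    have hcontK : ContinuousOn (fun p : ℝ × ℝ =>
        (2 * deriv (fun y => f y p.2) p.1 + 2 / 3 * deriv (fun y => f y p.2) p.1 ^ 3)
          * gt p.1 p.2) K := by
      apply ContinuousOn.mul
      · exact (continuousOn_const.mul (hgc.mono hKS)).add
          (continuousOn_const.mul ((hgc.mono hKS).pow 3))
      · intro p hp
        exact (hgtc p.1 p.2 (hIccsub hp.2)).continuousWithinAt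
    obtain ⟨C, hC⟩ := hKc.exists_bound_of_continuousOn hcontK
    have hmain := intervalIntegral.hasDerivAt_integral_of_dominated_loc_of_deriv_le
      (F := fun r x => deriv (fun y => f y r) x ^ 2 + deriv (fun y => f y r) x ^ 4 / 6)
      (F' := fun r x => (2 * deriv (fun y => f y r) x
        + 2 / 3 * deriv (fun y => f y r) x ^ 3) * gt x r)
      (x₀ := s) (s := Metric.ball s δ) (a := -Real.pi) (b := Real.pi) (bound := fun _ => |C|)
      (μ := volume) (Metric.ball_mem_nhds s hδ) ?_ ?_ ?_ ?_ ?_ ?_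
    · have := hmain.2
      rw [hstepC s hs] at this
      exact this
    · filter_upwards [Ioo_mem_nhds hs.1 hs.2] with r hr
      have hgsc : Continuous (deriv (fun y => f y r)) :=
        (contDiff_infty_iff_deriv.mp (hslice r (Ioo_subset_Icc_self hr))).2.continuous
      exact ((hgsc.pow 2).add ((hgsc.pow 4).div_const 6)).aestronglyMeasurable
    · have hgsc : Continuous (deriv (fun y => f y s)) :=
        (contDiff_infty_iff_deriv.mp (hslice s (Ioo_subset_Icc_self hs))).2.continuous
      exact ((hgsc.pow 2).add ((hgsc.pow 4).div_const 6)).intervalIntegrable _ _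
    · have hgsc : Continuous (deriv (fun y => f y s)) :=
        (contDiff_infty_iff_deriv.mp (hslice s (Ioo_subset_Icc_self hs))).2.continuous
      exact (((continuous_const.mul hgsc).add
        (continuous_const.mul (hgsc.pow 3))).mul (hgt_s_cont s hs)).aestronglyMeasurable
    · filter_upwards with x hx r hr
      have hxI : x ∈ Icc (-Real.pi) Real.pi := by
        rw [uIoc_of_le (by linarith : -Real.pi ≤ Real.pi)] at hx
        exact Ioc_subset_Icc_self hx
      exact (hC ((x : ℝ), r) ⟨hxI, hballsub hr⟩).trans (le_abs_self C)
    · exact intervalIntegrable_const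
    · filter_upwards with x hx r hr
      have hrI : r ∈ Ioo (0:ℝ) T := hIccsub (hballsub hr)
      have hgd := hgt_deriv x r hrI
      have h2 := ((hgd.pow 2).add ((hgd.pow 4).div_const 6))
      refine h2.congr_deriv ?_
      ring
  -- continuity of the energy and of the dissipation integral
  have hEcont : ContinuousOn (fun r => ∫ x in (-Real.pi)..Real.pi,
      (deriv (fun y => f y r) x ^ 2 + deriv (fun y => f y r) x ^ 4 / 6)) (Icc 0 T) :=
    param_cont (by linarith : -Real.pi ≤ Real.pi) isCompact_Icc
      (((hgc.pow 2)).add ((hgc.pow 4).div_const 6))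
  have hIcont : ContinuousOn (fun r => ∫ x in (-Real.pi)..Real.pi,
      deriv (fun y => f y r) x * Λfx x r) (Icc 0 T) :=
    param_cont (by linarith : -Real.pi ≤ Real.pi) isCompact_Icc (hgc.mul hΛxc)
  -- fundamental theorem of calculus on [0, t]
  have hsub : Icc (0:ℝ) t ⊆ Icc (0:ℝ) T := Icc_subset_Icc le_rfl ht.2
  have hFTC := intervalIntegral.integral_eq_sub_of_hasDeriv_right_of_le ht.1
    ((hEcont.mono hsub))
    (fun s hsIoo => ((hE' s ⟨hsIoo.1, lt_of_lt_of_le hsIoo.2 ht.2⟩).hasDerivWithinAt))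
    (by
      apply ContinuousOn.intervalIntegrable
      rw [uIcc_of_le ht.1]
      exact continuousOn_const.mul (hIcont.mono hsub))
  have hpull : (∫ s in (0:ℝ)..t, -2 * ∫ x in (-Real.pi)..Real.pi,
        deriv (fun y => f y s) x * Λfx x s)
      = -2 * ∫ s in (0:ℝ)..t, ∫ x in (-Real.pi)..Real.pi,
          deriv (fun y => f y s) x * Λfx x s := intervalIntegral.integral_const_mul _ _
  rw [hpull] at hFTC
  -- splitting the energy integral
  have hsplit : ∀ s ∈ Icc (0:ℝ) T,
      (∫ x in (-Real.pi)..Real.pi,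
          (deriv (fun y => f y s) x ^ 2 + deriv (fun y => f y s) x ^ 4 / 6))
        = (∫ x in (-Real.pi)..Real.pi, deriv (fun y => f y s) x ^ 2)
          + (1 / 6) * ∫ x in (-Real.pi)..Real.pi, deriv (fun y => f y s) x ^ 4 := by
    intro s hs
    have hgsc : Continuous (deriv (fun y => f y s)) :=
      (contDiff_infty_iff_deriv.mp (hslice s hs)).2.continuous
    rw [intervalIntegral.integral_add (f := fun x => deriv (fun y => f y s) x ^ 2)
      (g := fun x => deriv (fun y => f y s) x ^ 4 / 6) ((hgsc.pow 2).intervalIntegrable _ _)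
      (((hgsc.pow 4).div_const 6).intervalIntegrable _ _),
      intervalIntegral.integral_div]
    ring
  have h0T : (0:ℝ) ∈ Icc (0:ℝ) T := ⟨le_rfl, hT.le⟩
  have e1 := hsplit t ht
  have e2 := hsplit 0 h0T
  linarith [hFTC, e1, e2]
end

section
/- Let g : ℝ → ℝ be 2π-periodic and continuously differentiable, with g' Hölder continuous of some exponent a ∈ (0,1]. Then for every x the principal-value limit Λg(x) := (1/(4π))·lim_{ε→0⁺} ∫_{ε<|η|<π} (g(x)−g(x−η))/sin²(η/2) dη exists, the double integral below converges absolutely, and ∫_{−π}^{π} Λg(x)/(1+g(x)²) dx = −(1/(8π)) ∫_{−π}^{π}∫_{−π}^{π} (g(x)−g(y))²·(g(x)+g(y)) / ( sin²((x−y)/2)·(1+g(x)²)·(1+g(y)²) ) dx dy. In particular, if g ≥ 0 then ∫_{−π}^{π} Λg/(1+g²) dx ≤ 0. -/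
/-!
Hölder continuity of `g'` makes the symmetric second difference `2 g x - g (x - η) - g (x + η)`
of order `|η| ^ (1 + a)`, so the symmetrized kernel is dominated by the integrable `|η| ^ (a - 1)`
and, by dominated convergence, the principal value is an ordinary integral over `η`. Integrating
it against `φ = 1 / (1 + g²)` and exchanging the integrals, periodicity allows the shift
`x ↦ x + η` in one half of the second difference, which turns `φ x (2 g x - g (x - η) - g (x + η))`
into `(φ x - φ (x + η)) (g x - g (x + η))`, that is, into
`-(g x - g (x + η))² (g x + g (x + η)) / ((1 + g x²) (1 + g (x + η)²))`. This last integrand is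
bounded, hence the double integral converges absolutely, because a periodic Lipschitz `g`
satisfies `|g x - g y| ≤ L π |sin ((x - y) / 2)|`.
-/

open MeasureTheory Filter Set

open Real Topology

lemma abs_le_pi_mul_abs_sin_half {η : ℝ} (hη : |η| ≤ π) : |η| ≤ π * |sin (η / 2)| := by
  have h : |η / 2| ≤ π / 2 := by rw [abs_div, abs_two]; linarith
  have := mul_le_sin (abs_nonneg (η / 2)) h
  rw [abs_sin_eq_sin_abs_of_abs_le_pi (by linarith [pi_pos])]
  rw [abs_div, abs_two] at this ⊢
  have hπ := pi_pos
  field_simp at this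
  linarith

lemma intervalIntegrable_abs_rpow {r : ℝ} (hr : -1 < r) (a b : ℝ) :
    IntervalIntegrable (fun x : ℝ => |x| ^ r) volume a b := by
  simpa [Complex.norm_cpow_real] using
    (intervalIntegral.intervalIntegrable_cpow' (r := r) (a := a) (b := b) (by simpa using hr)).norm

lemma setIntegral_comp_neg_of_neg_eq {G E : Type*} [MeasurableSpace G] [AddGroup G]
    [MeasurableNeg G] [NormedAddCommGroup E] [NormedSpace ℝ E] {μ : Measure G}
    [μ.IsNegInvariant] (f : G → E) {s : Set G} (hs : -s = s) :
    ∫ x in s, f (-x) ∂μ = ∫ x in s, f x ∂μ := by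
  simpa [hs] using (Measure.measurePreserving_neg μ).setIntegral_preimage_emb
    measurableEmbedding_neg f s

lemma intervalIntegral_integral_swap {E : Type*} [NormedAddCommGroup E] [NormedSpace ℝ E]
    {f : ℝ → ℝ → E} {a b c d : ℝ} (hab : a ≤ b) (hcd : c ≤ d)
    (hf : IntegrableOn (Function.uncurry f) (Ioc a b ×ˢ Ioc c d)) :
    ∫ x in a..b, ∫ y in c..d, f x y = ∫ y in c..d, ∫ x in a..b, f x y := by
  simp only [intervalIntegral.integral_of_le hab, intervalIntegral.integral_of_le hcd]
  exact integral_integral_swap (by rwa [Measure.prod_restrict])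

lemma Function.Periodic.exists_lipschitzWith {g : ℝ → ℝ} {T : ℝ} (hper : Function.Periodic g T)
    (hT : T ≠ 0) (hg : ContDiff ℝ 1 g) : ∃ L, LipschitzWith L g := by
  have hdper : Function.Periodic (deriv g) T := fun x => by
    simpa using (deriv_comp_add_const (f := g) (a := T) x).symm.trans (by rw [funext hper])
  obtain ⟨C, hC⟩ := isBounded_iff_forall_norm_le.1
    (hdper.isBounded_of_continuous hT (hg.continuous_deriv le_rfl))
  refine ⟨C.toNNReal, lipschitzWith_of_nnnorm_deriv_le (hg.differentiable one_ne_zero) fun x => ?_⟩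
  rw [← NNReal.coe_le_coe, coe_nnnorm]
  exact (hC _ (mem_range_self x)).trans (le_coe_toNNReal C)

lemma LipschitzWith.abs_sub_le_mul_abs_sin_of_periodic {g : ℝ → ℝ} {L : NNReal}
    (hg : LipschitzWith L g) (hper : Function.Periodic g (2 * π)) (x y : ℝ) :
    |g x - g y| ≤ L * π * |sin ((x - y) / 2)| := by
  -- reduce `x - y` modulo `2π` to `m ∈ (-π, π]`, keeping track of `g (y + ·)` and `|sin (· / 2)|`
  have hf : Function.Periodic (fun t => (g (y + t), |sin (t / 2)|)) (2 * π) := fun t => by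
    simp only [← add_assoc, hper _, add_div, mul_div_cancel_left₀ π two_ne_zero, sin_add_pi,
      abs_neg]
  obtain ⟨m, hm, hfm⟩ := hf.exists_mem_Ioc two_pi_pos (x - y) (-π)
  simp only [add_sub_cancel, Prod.ext_iff] at hfm
  have hm' : |m| ≤ π := abs_le.2 ⟨hm.1.le, by linarith [hm.2]⟩
  calc |g x - g y| = dist (g (y + m)) (g y) := by rw [hfm.1, dist_eq]
    _ ≤ L * |m| := by simpa [dist_eq] using hg.dist_le_mul (y + m) y
    _ ≤ L * (π * |sin (m / 2)|) := by gcongr; exact abs_le_pi_mul_abs_sin_half hm'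
    _ = L * π * |sin ((x - y) / 2)| := by rw [hfm.2]; ring

lemma abs_two_mul_sub_sub_le_of_holder_deriv {g : ℝ → ℝ} {a K : ℝ} (ha : 0 ≤ a)
    (hg : Differentiable ℝ g) (hhold : ∀ x y, |deriv g x - deriv g y| ≤ K * |x - y| ^ a)
    (x η : ℝ) : |2 * g x - g (x - η) - g (x + η)| ≤ 2 ^ a * K * |η| ^ a * |η| := by
  have hK : 0 ≤ K := by simpa using (abs_nonneg _).trans (hhold 0 1)
  have hderiv : ∀ t, HasDerivAt (fun t => g (x + t) + g (x - t))
      (deriv g (x + t) - deriv g (x - t)) t := fun t =>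
    (((hg (x + t)).hasDerivAt.comp_const_add x t).add
      ((hg (x - t)).hasDerivAt.comp_const_sub x t)).congr_deriv (sub_eq_add_neg _ _).symm
  have hbound : ∀ t ∈ uIcc 0 η, ‖deriv g (x + t) - deriv g (x - t)‖ ≤ 2 ^ a * K * |η| ^ a := by
    intro t ht
    have htη : |t| ≤ |η| := by simpa using abs_sub_left_of_mem_uIcc ht
    calc ‖deriv g (x + t) - deriv g (x - t)‖ ≤ K * |x + t - (x - t)| ^ a := hhold _ _
      _ = K * (2 ^ a * |t| ^ a) := by
          rw [show x + t - (x - t) = 2 * t by ring, abs_mul, abs_two,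
            mul_rpow zero_le_two (abs_nonneg t)]
      _ ≤ K * (2 ^ a * |η| ^ a) := by gcongr
      _ = 2 ^ a * K * |η| ^ a := by ring
  have := (convex_uIcc 0 η).norm_image_sub_le_of_norm_hasDerivWithin_le
    (fun t _ => (hderiv t).hasDerivWithinAt) hbound left_mem_uIcc right_mem_uIcc
  rw [← abs_neg]
  convert this using 1
  · simp only [add_zero, sub_zero, Real.norm_eq_abs]; ring_nf
  · simp

noncomputable def symmKernel (g : ℝ → ℝ) (x η : ℝ) : ℝ :=
  (2 * g x - g (x - η) - g (x + η)) / sin (η / 2) ^ 2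

lemma abs_symmKernel_le {g : ℝ → ℝ} {a K : ℝ} (ha : 0 < a)
    (hg : Differentiable ℝ g) (hhold : ∀ x y, |deriv g x - deriv g y| ≤ K * |x - y| ^ a)
    (x η : ℝ) (hη : |η| ≤ π) :
    |symmKernel g x η| ≤ 2 ^ a * K * π ^ 2 * |η| ^ (a - 1) := by
  have hK : 0 ≤ K := by simpa using (abs_nonneg _).trans (hhold 0 1)
  have hsin : |η| ^ 2 ≤ π ^ 2 * sin (η / 2) ^ 2 := by
    simpa [mul_pow, sq_abs] using
      pow_le_pow_left₀ (abs_nonneg η) (abs_le_pi_mul_abs_sin_half hη) 2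
  have hpow : |η| ^ a = |η| ^ (a - 1) * |η| := by
    rw [← rpow_add_one' (abs_nonneg η) (by simpa using ha.ne'), sub_add_cancel]
  rw [symmKernel, abs_div, abs_of_nonneg (sq_nonneg (sin (η / 2)))]
  refine div_le_of_le_mul₀ (sq_nonneg _) (by positivity) ?_
  calc |2 * g x - g (x - η) - g (x + η)| ≤ 2 ^ a * K * |η| ^ a * |η| :=
        abs_two_mul_sub_sub_le_of_holder_deriv ha.le hg hhold x η
    _ = 2 ^ a * K * |η| ^ (a - 1) * |η| ^ 2 := by rw [hpow]; ring
    _ ≤ 2 ^ a * K * |η| ^ (a - 1) * (π ^ 2 * sin (η / 2) ^ 2) := by gcongr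
    _ = _ := by ring

lemma integrableOn_symmKernel {g : ℝ → ℝ} (hg : Continuous g) {x : ℝ} {B : ℝ → ℝ}
    (hB : IntegrableOn B (Ioc (-π) π)) (hWB : ∀ η, |η| ≤ π → |symmKernel g x η| ≤ B η) :
    IntegrableOn (symmKernel g x) (Ioc (-π) π) := by
  refine hB.mono' (Measurable.aestronglyMeasurable (by unfold symmKernel; fun_prop)) ?_
  rw [ae_restrict_iff' measurableSet_Ioc]
  exact Eventually.of_forall fun η hη => hWB η (abs_le.2 ⟨hη.1.le, hη.2⟩)

lemma integrableOn_div_sin_sq_annulus {f : ℝ → ℝ} (hf : Continuous f) {ε : ℝ} (hε : 0 < ε) :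
    IntegrableOn (fun η => f η / sin (η / 2) ^ 2) {η | ε < |η| ∧ |η| < π} := by
  have hK : IsCompact (Icc (-π) π ∩ {η | ε ≤ |η|}) :=
    isCompact_Icc.inter_right (isClosed_le continuous_const continuous_abs)
  refine (ContinuousOn.integrableOn_compact hK ?_).mono_set fun η hη =>
    ⟨abs_le.1 hη.2.le, hη.1.le⟩
  refine hf.continuousOn.div (by fun_prop) fun η hη => pow_ne_zero 2 fun h0 => ?_
  have := abs_le_pi_mul_abs_sin_half (abs_le.2 hη.1)
  rw [h0, abs_zero, mul_zero] at this
  linarith [show ε ≤ |η| from hη.2]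

lemma tendsto_setIntegral_annulus {W : ℝ → ℝ} {R : ℝ} (hW : IntegrableOn W (Ioo (-R) R)) :
    Tendsto (fun ε => ∫ η in {η | ε < |η| ∧ |η| < R}, W η) (𝓝[>] 0)
      (𝓝 (∫ η in Ioo (-R) R, W η)) := by
  have hS : ∀ ε, {η : ℝ | ε < |η| ∧ |η| < R} = Ioo (-R) R ∩ {η | ε < |η|} := fun ε => by
    ext η; simp [abs_lt, and_comm]
  have hmeas : ∀ ε : ℝ, MeasurableSet {η : ℝ | ε < |η|} := fun ε =>
    measurableSet_lt measurable_const measurable_abs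
  simp_rw [hS, ← setIntegral_indicator (hmeas _)]
  refine tendsto_integral_filter_of_dominated_convergence (fun η => ‖W η‖)
    (Eventually.of_forall fun ε => hW.aestronglyMeasurable.indicator (hmeas ε))
    (Eventually.of_forall fun ε => Eventually.of_forall fun η => norm_indicator_le_norm_self _ _)
    hW.norm ?_
  have h0 : ∀ᵐ η ∂volume.restrict (Ioo (-R) R), η ≠ 0 := ae_restrict_of_ae (by simp [ae_iff])
  filter_upwards [h0] with η hη
  refine tendsto_const_nhds.congr' ?_
  filter_upwards [Ioo_mem_nhdsGT (abs_pos.2 hη)] with ε hε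
  exact (indicator_of_mem (show η ∈ {η | ε < |η|} from hε.2) W).symm

lemma tendsto_setIntegral_annulus_of_symm {F : ℝ → ℝ} {R : ℝ}
    (hF : ∀ ε > 0, IntegrableOn F {η | ε < |η| ∧ |η| < R})
    (hW : IntegrableOn (fun η => F η + F (-η)) (Ioo (-R) R)) :
    Tendsto (fun ε => ∫ η in {η | ε < |η| ∧ |η| < R}, F η) (𝓝[>] 0)
      (𝓝 ((1 / 2) * ∫ η in Ioo (-R) R, (F η + F (-η)))) := by
  refine ((tendsto_setIntegral_annulus hW).const_mul (1 / 2)).congr' ?_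
  filter_upwards [self_mem_nhdsWithin] with ε hε
  have hsymm : -{η : ℝ | ε < |η| ∧ |η| < R} = {η | ε < |η| ∧ |η| < R} := by
    ext η; simp
  have hFneg : IntegrableOn (fun η => F (-η)) {η | ε < |η| ∧ |η| < R} := by
    have := (Measure.measurePreserving_neg (volume : Measure ℝ)).integrableOn_comp_preimage
      measurableEmbedding_neg (f := F) (s := {η | ε < |η| ∧ |η| < R})
    simpa [hsymm, Function.comp_def] using this.2 (hF ε hε)
  rw [integral_add (hF ε hε) hFneg, setIntegral_comp_neg_of_neg_eq F hsymm]
  ring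

lemma hasPVLambdaT_of_integrableOn_symmKernel {g : ℝ → ℝ} (hg : Continuous g) {x : ℝ}
    (hW : IntegrableOn (symmKernel g x) (Ioc (-π) π)) :
    HasPVLambdaT g x ((1 / (8 * π)) * ∫ η in (-π)..π, symmKernel g x η) := by
  have hsymm : ∀ η, (g x - g (x - η)) / sin (η / 2) ^ 2 + (g x - g (x - -η)) / sin (-η / 2) ^ 2
      = symmKernel g x η := fun η => by
    rw [symmKernel, neg_div, sin_neg, neg_sq, sub_neg_eq_add, ← add_div]; ring_nf
  have hlim := tendsto_setIntegral_annulus_of_symm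
    (fun ε hε => integrableOn_div_sin_sq_annulus (f := fun η => g x - g (x - η)) (by fun_prop) hε)
    (by simpa only [hsymm] using hW.mono_set Ioo_subset_Ioc_self)
  simp only [hsymm] at hlim
  rw [HasPVLambdaT, intervalIntegral.integral_of_le (by linarith [pi_pos]),
    integral_Ioc_eq_integral_Ioo,
    show ∀ I : ℝ, 1 / (8 * π) * I = 1 / (4 * π) * (1 / 2 * I) from fun I => by ring]
  exact hlim.const_mul _

lemma intervalIntegral_mul_two_mul_sub_sub_of_periodic {φ g : ℝ → ℝ} {T : ℝ}
    (hφ : Continuous φ) (hg : Continuous g) (hφT : Function.Periodic φ T)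
    (hgT : Function.Periodic g T) (a η : ℝ) :
    ∫ x in a..a + T, φ x * (2 * g x - g (x - η) - g (x + η))
      = ∫ x in a..a + T, (φ x - φ (x + η)) * (g x - g (x + η)) := by
  have hshift : ∫ x in a..a + T, φ x * (g x - g (x - η))
      = ∫ x in a..a + T, φ (x + η) * (g (x + η) - g x) := by
    have hper : Function.Periodic (fun x => φ x * (g x - g (x - η))) T := fun x => by
      simp only [add_sub_right_comm x T η, hφT x, hgT x, hgT (x - η)]
    rw [hper.intervalIntegral_add_eq a (a + η), add_right_comm a η T,
      ← intervalIntegral.integral_comp_add_right]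
    simp only [add_sub_cancel_right]
  have hint : ∀ f : ℝ → ℝ, Continuous f → IntervalIntegrable f volume a (a + T) :=
    fun f hf => hf.intervalIntegrable _ _
  calc ∫ x in a..a + T, φ x * (2 * g x - g (x - η) - g (x + η))
      = (∫ x in a..a + T, φ x * (g x - g (x + η)))
          + ∫ x in a..a + T, φ x * (g x - g (x - η)) := by
        rw [← intervalIntegral.integral_add (hint _ (by fun_prop)) (hint _ (by fun_prop))]
        congr 1; ext x; ring
    _ = ∫ x in a..a + T, (φ x - φ (x + η)) * (g x - g (x + η)) := by
        rw [hshift, ← intervalIntegral.integral_add (hint _ (by fun_prop)) (hint _ (by fun_prop))]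
        congr 1; ext x; ring

noncomputable def dissipationDensity (g : ℝ → ℝ) (x y : ℝ) : ℝ :=
  (g x - g y) ^ 2 * (g x + g y) / (sin ((x - y) / 2) ^ 2 * (1 + g x ^ 2) * (1 + g y ^ 2))

lemma one_div_one_add_sq_sub_mul_sub (u v : ℝ) :
    (1 / (1 + u ^ 2) - 1 / (1 + v ^ 2)) * (u - v)
      = -((u - v) ^ 2 * (u + v) / ((1 + u ^ 2) * (1 + v ^ 2))) := by
  field_simp
  ring

lemma abs_add_le_one_add_sq_mul_one_add_sq (u v : ℝ) : |u + v| ≤ (1 + u ^ 2) * (1 + v ^ 2) := by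
  have hu : |u| ≤ (1 + u ^ 2) / 2 := by nlinarith [sq_abs u, sq_nonneg (|u| - 1)]
  have hv : |v| ≤ (1 + v ^ 2) / 2 := by nlinarith [sq_abs v, sq_nonneg (|v| - 1)]
  nlinarith [abs_add_le u v, mul_nonneg (sq_nonneg u) (sq_nonneg v)]

lemma abs_dissipationDensity_le {g : ℝ → ℝ} {C : ℝ}
    (hg : ∀ x y, |g x - g y| ≤ C * |sin ((x - y) / 2)|) (x y : ℝ) :
    |dissipationDensity g x y| ≤ C ^ 2 := by
  have hsq : (g x - g y) ^ 2 ≤ C ^ 2 * sin ((x - y) / 2) ^ 2 := by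
    rw [← sq_abs, ← sq_abs (sin _), ← mul_pow]
    exact pow_le_pow_left₀ (abs_nonneg _) (hg x y) 2
  have hden : 0 ≤ sin ((x - y) / 2) ^ 2 * (1 + g x ^ 2) * (1 + g y ^ 2) := by positivity
  rw [dissipationDensity, abs_div, abs_of_nonneg hden, abs_mul,
    abs_of_nonneg (sq_nonneg (g x - g y))]
  refine div_le_of_le_mul₀ hden (sq_nonneg C) ?_
  calc (g x - g y) ^ 2 * |g x + g y|
      ≤ C ^ 2 * sin ((x - y) / 2) ^ 2 * ((1 + g x ^ 2) * (1 + g y ^ 2)) :=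
        mul_le_mul hsq (abs_add_le_one_add_sq_mul_one_add_sq _ _) (abs_nonneg _) (by positivity)
    _ = _ := by ring

lemma intervalIntegral_symmKernel_div_one_add_sq {g : ℝ → ℝ} (hg : Continuous g)
    (hper : Function.Periodic g (2 * π)) (η : ℝ) :
    ∫ x in (-π)..π, symmKernel g x η / (1 + g x ^ 2)
      = -∫ x in (-π)..π, dissipationDensity g x (x + η) := by
  have hφ : Function.Periodic (fun x => 1 / (1 + g x ^ 2)) (2 * π) := fun x => by
    simp only [hper x]
  have key := intervalIntegral_mul_two_mul_sub_sub_of_periodic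
    (φ := fun x => 1 / (1 + g x ^ 2)) (continuous_const.div (by fun_prop) fun x => by positivity)
    hg hφ hper (-π) η
  rw [show -π + 2 * π = π by ring] at key
  calc ∫ x in (-π)..π, symmKernel g x η / (1 + g x ^ 2)
      = (∫ x in (-π)..π, 1 / (1 + g x ^ 2) * (2 * g x - g (x - η) - g (x + η)))
          / sin (η / 2) ^ 2 := by
        rw [← intervalIntegral.integral_div]
        congr 1; ext x; rw [symmKernel]; ring
    _ = ∫ x in (-π)..π, -dissipationDensity g x (x + η) := by
        rw [key, ← intervalIntegral.integral_div]
        congr 1; ext x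
        rw [one_div_one_add_sq_sub_mul_sub, dissipationDensity,
          show (x - (x + η)) / 2 = -(η / 2) by ring, sin_neg, neg_sq, neg_div, div_div]
        congr 2
        ring
    _ = _ := intervalIntegral.integral_neg

lemma intervalIntegral_dissipationDensity_comp_add_left {g : ℝ → ℝ}
    (hper : Function.Periodic g (2 * π)) (x : ℝ) :
    ∫ η in (-π)..π, dissipationDensity g x (x + η) = ∫ y in (-π)..π, dissipationDensity g x y := by
  have hQ : Function.Periodic (dissipationDensity g x) (2 * π) := fun y => by
    rw [dissipationDensity, dissipationDensity, hper y,
      show (x - (y + 2 * π)) / 2 = (x - y) / 2 - π by ring, sin_sub_pi, neg_sq]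
  rw [intervalIntegral.integral_comp_add_left, ← sub_eq_add_neg,
    show x + π = x - π + 2 * π by ring, hQ.intervalIntegral_add_eq (x - π) (-π),
    show -π + 2 * π = π by ring]

lemma integrableOn_uncurry_symmKernel_div {g : ℝ → ℝ} (hg : Continuous g) {B : ℝ → ℝ}
    (hB : IntegrableOn B (Ioc (-π) π)) (hWB : ∀ x η, |η| ≤ π → |symmKernel g x η| ≤ B η) :
    IntegrableOn (Function.uncurry fun x η => symmKernel g x η / (1 + g x ^ 2))
      (Ioc (-π) π ×ˢ Ioc (-π) π) := by
  refine Integrable.mono' (g := fun p => B p.2) ?_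
    (Measurable.aestronglyMeasurable (by unfold symmKernel Function.uncurry; fun_prop)) ?_
  · have := hB.comp_snd (volume.restrict (Ioc (-π) π))
    rwa [Measure.prod_restrict, ← Measure.volume_eq_prod] at this
  · rw [ae_restrict_iff' (measurableSet_Ioc.prod measurableSet_Ioc)]
    refine Eventually.of_forall fun p hp => ?_
    rw [Function.uncurry_apply_pair, Real.norm_eq_abs, abs_div,
      abs_of_pos (by positivity : (0 : ℝ) < 1 + g p.1 ^ 2)]
    exact (div_le_self (abs_nonneg _) (le_add_of_nonneg_right (sq_nonneg _))).trans
      (hWB _ _ (abs_le.2 ⟨hp.2.1.le, hp.2.2⟩))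

lemma integral_symmKernel_div_eq_neg_integral_dissipationDensity {g : ℝ → ℝ}
    (hg : Continuous g) (hper : Function.Periodic g (2 * π)) {B : ℝ → ℝ}
    (hB : IntegrableOn B (Ioc (-π) π)) (hWB : ∀ x η, |η| ≤ π → |symmKernel g x η| ≤ B η)
    {C : ℝ} (hQ : ∀ x y, |dissipationDensity g x y| ≤ C) :
    ∫ x in (-π)..π, (∫ η in (-π)..π, symmKernel g x η) / (1 + g x ^ 2)
      = -∫ x in (-π)..π, ∫ y in (-π)..π, dissipationDensity g x y := by
  have hπ : -π ≤ π := by linarith [pi_pos]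
  have hQ' : IntegrableOn (Function.uncurry fun x η => dissipationDensity g x (x + η))
      (Ioc (-π) π ×ˢ Ioc (-π) π) :=
    Measure.integrableOn_of_bounded
      ((Metric.isBounded_Ioc _ _).prod (Metric.isBounded_Ioc _ _) |>.measure_lt_top.ne)
      (Measurable.aestronglyMeasurable (by unfold dissipationDensity Function.uncurry; fun_prop))
      (M := C) (Eventually.of_forall fun p => hQ _ _)
  calc ∫ x in (-π)..π, (∫ η in (-π)..π, symmKernel g x η) / (1 + g x ^ 2)
      = ∫ x in (-π)..π, ∫ η in (-π)..π, symmKernel g x η / (1 + g x ^ 2) := by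
        simp only [intervalIntegral.integral_div]
    _ = ∫ η in (-π)..π, -∫ x in (-π)..π, dissipationDensity g x (x + η) := by
        rw [intervalIntegral_integral_swap hπ hπ (integrableOn_uncurry_symmKernel_div hg hB hWB)]
        simp only [intervalIntegral_symmKernel_div_one_add_sq hg hper]
    _ = -∫ x in (-π)..π, ∫ y in (-π)..π, dissipationDensity g x y := by
        rw [intervalIntegral.integral_neg, ← intervalIntegral_integral_swap hπ hπ hQ']
        simp only [intervalIntegral_dissipationDensity_comp_add_left hper]

theorem symmetrization_identity_periodic_general
    (g : ℝ → ℝ) (a K : ℝ) (ha : 0 < a)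
    -- 2π-periodic, continuously differentiable
    (hper : ∀ x : ℝ, g (x + 2 * Real.pi) = g x)
    (hg : ContDiff ℝ 1 g)
    -- g' is a-Hölder continuous
    (hhold : ∀ x y : ℝ, |deriv g x - deriv g y| ≤ K * |x - y| ^ a) :
    ∃ Λg : ℝ → ℝ,
      (∀ x : ℝ, HasPVLambdaT g x (Λg x)) ∧
      IntegrableOn (fun p : ℝ × ℝ =>
          (g p.1 - g p.2) ^ 2 * (g p.1 + g p.2) /
            (Real.sin ((p.1 - p.2) / 2) ^ 2 * (1 + g p.1 ^ 2) * (1 + g p.2 ^ 2)))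
        (Icc (-Real.pi) Real.pi ×ˢ Icc (-Real.pi) Real.pi) ∧
      (∫ x in (-Real.pi)..Real.pi, Λg x / (1 + g x ^ 2))
        = -(1 / (8 * Real.pi)) *
            ∫ x in (-Real.pi)..Real.pi, ∫ y in (-Real.pi)..Real.pi,
              (g x - g y) ^ 2 * (g x + g y) /
                (Real.sin ((x - y) / 2) ^ 2 * (1 + g x ^ 2) * (1 + g y ^ 2)) ∧
      ((∀ x : ℝ, 0 ≤ g x) → (∫ x in (-Real.pi)..Real.pi, Λg x / (1 + g x ^ 2)) ≤ 0) := by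
  have hπ : -π ≤ π := by linarith [pi_pos]
  have hgc : Continuous g := hg.continuous
  obtain ⟨L, hL⟩ := Function.Periodic.exists_lipschitzWith hper (by positivity) hg
  have hQ := abs_dissipationDensity_le (C := L * π) (hL.abs_sub_le_mul_abs_sin_of_periodic hper)
  have hB : IntegrableOn (fun η => 2 ^ a * K * π ^ 2 * |η| ^ (a - 1)) (Ioc (-π) π) :=
    (intervalIntegrable_iff_integrableOn_Ioc_of_le hπ).1
      ((intervalIntegrable_abs_rpow (by linarith) _ _).const_mul _)
  have hWB := abs_symmKernel_le ha (hg.differentiable one_ne_zero) hhold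
  have hid : ∫ x in (-π)..π, (1 / (8 * π) * ∫ η in (-π)..π, symmKernel g x η) / (1 + g x ^ 2)
      = -(1 / (8 * π)) * ∫ x in (-π)..π, ∫ y in (-π)..π, dissipationDensity g x y := by
    simp only [mul_div_assoc, intervalIntegral.integral_const_mul,
      integral_symmKernel_div_eq_neg_integral_dissipationDensity hgc hper hB hWB hQ]
    ring
  refine ⟨fun x => 1 / (8 * π) * ∫ η in (-π)..π, symmKernel g x η,
    fun x => hasPVLambdaT_of_integrableOn_symmKernel hgc
      (integrableOn_symmKernel hgc hB (hWB x)),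
    Measure.integrableOn_of_bounded
      ((isCompact_Icc.prod isCompact_Icc).measure_lt_top.ne)
      (Measurable.aestronglyMeasurable (by fun_prop)) (Eventually.of_forall fun p => hQ _ _),
    hid, fun hg0 => hid ▸ ?_⟩
  refine mul_nonpos_of_nonpos_of_nonneg (by simp [pi_pos.le])
    (intervalIntegral.integral_nonneg hπ fun x _ => intervalIntegral.integral_nonneg hπ
      fun y _ => div_nonneg (mul_nonneg (sq_nonneg _) (add_nonneg (hg0 x) (hg0 y))) ?_)
  positivity

/-- the periodic symmetrization identity
`∫ Λg/(1+g²) = −(1/8π) ∬ (g(x)−g(y))²(g(x)+g(y)) / (sin²((x−y)/2)(1+g(x)²)(1+g(y)²))`,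
and its sign consequence for `g ≥ 0`. -/
theorem symmetrization_identity_periodic
    (g : ℝ → ℝ) (a K : ℝ) (ha : 0 < a) (ha1 : a ≤ 1)
    -- 2π-periodic, continuously differentiable
    (hper : ∀ x : ℝ, g (x + 2 * Real.pi) = g x)
    (hg : ContDiff ℝ 1 g)
    -- g' is a-Hölder continuous
    (hhold : ∀ x y : ℝ, |deriv g x - deriv g y| ≤ K * |x - y| ^ a) :
    ∃ Λg : ℝ → ℝ,
      (∀ x : ℝ, HasPVLambdaT g x (Λg x)) ∧
      IntegrableOn (fun p : ℝ × ℝ =>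
          (g p.1 - g p.2) ^ 2 * (g p.1 + g p.2) /
            (Real.sin ((p.1 - p.2) / 2) ^ 2 * (1 + g p.1 ^ 2) * (1 + g p.2 ^ 2)))
        (Icc (-Real.pi) Real.pi ×ˢ Icc (-Real.pi) Real.pi) ∧
      (∫ x in (-Real.pi)..Real.pi, Λg x / (1 + g x ^ 2))
        = -(1 / (8 * Real.pi)) *
            ∫ x in (-Real.pi)..Real.pi, ∫ y in (-Real.pi)..Real.pi,
              (g x - g y) ^ 2 * (g x + g y) /
                (Real.sin ((x - y) / 2) ^ 2 * (1 + g x ^ 2) * (1 + g y ^ 2)) ∧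
      ((∀ x : ℝ, 0 ≤ g x) → (∫ x in (-Real.pi)..Real.pi, Λg x / (1 + g x ^ 2)) ≤ 0) :=
  symmetrization_identity_periodic_general g a K ha hper hg hhold
end
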